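/- arXiv:2101.07593 — 8 statements merged into one kernel-verified Lean document; each statement's English description precedes it below -/
import Mathlib

section
/- Let n and s_1, ..., s_v be positive integers such that s_g(n) = s_1 + ... + s_v and s_v > (g-2)(v-1). Then there exist positive integers n_1, ..., n_v such that the base-g representation of n is the concatenation of the base-g representations of n_1, ..., n_v (in order), and |s_g(n_i) - s_i| ≤ (g-2)(v-1) for each i = 1, ..., v. -/
/-!
Cut the digit string of `n` from the most significant end. Since every digit is at most `g - 1`,
the prefix digit sums never jump over a window of `g - 1` consecutive values, so one can cut off a
leading block whose digit sum lies in `[sᵢ, sᵢ + g - 2]`; placing the cut as far toward the least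
significant end as possible makes the remainder begin with a nonzero digit. Doing this for the
first `v - 1` pieces errs by at most `g - 2` each, so the last piece, which takes what is left,
errs by at most `(g - 2)(v - 1)`, and `s_v > (g - 2)(v - 1)` leaves enough digit sum for each cut.
-/

namespace List

theorem exists_take_sum_mem_Ico {L : List ℕ} {c x : ℕ} (hc : ∀ d ∈ L, d ≤ c) (hx : 0 < x)
    (hxL : x ≤ L.sum) :
    ∃ k, (L.take k).sum ∈ Set.Ico x (x + c) ∧ ∀ h : L.take k ≠ [], (L.take k).getLast h ≠ 0 := by
  have hex : ∃ k, x ≤ (L.take k).sum := ⟨L.length, by rwa [take_length]⟩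
  obtain ⟨j, hj⟩ : ∃ j, Nat.find hex = j + 1 :=
    Nat.exists_eq_add_one_of_ne_zero fun h0 => by simpa [h0] using Nat.find_spec hex |>.trans_lt' hx
  have hreach := Nat.find_spec hex
  have hbelow : (L.take j).sum < x := not_le.mp (Nat.find_min hex (by omega))
  rw [hj] at hreach
  have hjL : j < L.length := by
    by_contra! h
    rw [take_of_length_le h] at hbelow
    omega
  have hstep := sum_take_succ L j hjL
  have hLj : L[j] ≤ c := hc _ (getElem_mem hjL)
  refine ⟨j + 1, ⟨hreach, by omega⟩, fun h => ?_⟩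
  rw [getLast_take, Nat.add_sub_cancel, getElem?_eq_getElem hjL, Option.getD_some]
  omega

end List

namespace Nat

theorem exists_digits_eq_append {g n a : ℕ} (hg : 1 < g) (ha : a + (g - 1) ≤ (digits g n).sum) :
    ∃ n' m, digits g n = digits g n' ++ digits g m ∧
      (digits g m).sum ∈ Set.Icc a (a + (g - 2)) := by
  set L := digits g n with hL
  have hlt : ∀ d ∈ L, d < g := fun d hd => digits_lt_base hg hd
  obtain ⟨k, hk, hlast⟩ := L.exists_take_sum_mem_Ico (c := g - 1) (x := L.sum - (a + (g - 2)))
    (fun d hd => le_sub_one_of_lt (hlt d hd)) (by omega) (by omega)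
  have htake : digits g (ofDigits g (L.take k)) = L.take k :=
    digits_ofDigits g hg _ (fun d hd => hlt d (List.mem_of_mem_take hd)) hlast
  have hdrop : digits g (ofDigits g (L.drop k)) = L.drop k := by
    refine digits_ofDigits g hg _ (fun d hd => hlt d (List.mem_of_mem_drop hd)) fun h => ?_
    have hn : n ≠ 0 := fun h0 => h (by simp [hL, h0])
    rw [List.getLast_drop]
    exact getLast_digit_ne_zero g hn
  refine ⟨ofDigits g (L.take k), ofDigits g (L.drop k),
    by rw [htake, hdrop, List.take_append_drop], ?_⟩
  have := L.sum_take_add_sum_drop k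
  rw [hdrop, Set.mem_Icc]
  rw [Set.mem_Ico] at hk
  omega

theorem ofDigits_flatten_reverse_ofFn (g : ℕ) {v : ℕ} (l : Fin v → List ℕ) :
    ofDigits g (List.ofFn l).reverse.flatten =
      ∑ i, ofDigits g (l i) * g ^ ∑ j ∈ Finset.Ioi i, (l j).length := by
  induction v with
  | zero => simp
  | succ v ih =>
    rw [List.ofFn_succ, List.reverse_cons, List.flatten_append, ofDigits_append, ih,
      Fin.sum_univ_succ, Fin.sum_Ioi_zero]
    simp only [Fin.sum_Ioi_succ, List.flatten_cons, List.flatten_nil, List.append_nil,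
      List.length_flatten, List.map_reverse, List.sum_reverse, List.map_ofFn, List.sum_ofFn,
      Function.comp_apply]
    ring

theorem exists_digits_eq_flatten {g : ℕ} (hg : 1 < g) {v : ℕ} (n : ℕ) (s : Fin v → ℕ)
    (hs : ∑ i, (s i + (g - 2)) < (digits g n).sum) :
    ∃ m : Fin (v + 1) → ℕ, digits g n = (List.ofFn fun i => digits g (m i)).reverse.flatten ∧
      ∀ i : Fin v, (digits g (m i.castSucc)).sum ∈ Set.Icc (s i) (s i + (g - 2)) := by
  induction v generalizing n with
  | zero => exact ⟨fun _ => n, by simp, nofun⟩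
  | succ v ih =>
    rw [Fin.sum_univ_succ] at hs
    obtain ⟨n', m₀, hn, hm₀⟩ := exists_digits_eq_append hg (a := s 0) (n := n) (by omega)
    have hsum : (digits g n).sum = (digits g n').sum + (digits g m₀).sum := by
      rw [hn, List.sum_append]
    obtain ⟨m', hn', hm'⟩ := ih n' (fun i => s i.succ) (by rw [Set.mem_Icc] at hm₀; omega)
    refine ⟨Fin.cons m₀ m', ?_, Fin.cases ?_ fun i => ?_⟩
    · simp [hn, hn', List.ofFn_succ]
    · simpa using hm₀
    · simpa [← Fin.succ_castSucc] using hm' i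

end Nat

theorem Fin.abs_sub_le_of_sum_eq {w c : ℕ} {x s : Fin (w + 1) → ℕ} (hsum : ∑ i, x i = ∑ i, s i)
    (h : ∀ i : Fin w, x i.castSucc ∈ Set.Icc (s i.castSucc) (s i.castSucc + c)) (i : Fin (w + 1)) :
    |(x i : ℤ) - s i| ≤ w * c := by
  rw [abs_sub_le_iff]
  induction i using Fin.lastCases with
  | cast j =>
    have := h j
    have : c ≤ w * c := Nat.le_mul_of_pos_left c j.pos
    simp only [Set.mem_Icc] at *
    omega
  | last =>
    rw [Fin.sum_univ_castSucc, Fin.sum_univ_castSucc] at hsum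
    have hlow := Finset.sum_le_sum fun j (_ : j ∈ Finset.univ) => (h j).1
    have hup := Finset.sum_le_sum fun j (_ : j ∈ Finset.univ) => (h j).2
    rw [Finset.sum_add_distrib, Finset.sum_const, Finset.card_univ, Fintype.card_fin,
      smul_eq_mul] at hup
    omega

/-- Lemma 1 (splitting): if `s_g(n) = s 0 + ⋯ + s (v-1)` and the last part satisfies
`s (v-1) > (g-2)(v-1)`, then `n`'s base-`g` digit string is the concatenation of the
digit strings of positive integers `m 0, …, m (v-1)` with `|s_g(m i) - s i| ≤ (g-2)(v-1)`.
Concatenation means `n = ∑ i, m i * g ^ (∑_{j > i} ℓ_g(m j))`. -/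
theorem niven_split (g : ℕ) (hg : 2 ≤ g) (n : ℕ) (v : ℕ) (hv : 0 < v)
    (s : Fin v → ℕ) (hs : ∀ i, 0 < s i)
    (hsum : (Nat.digits g n).sum = ∑ i, s i)
    (hlast : ((g : ℤ) - 2) * (v - 1) < (s ⟨v - 1, by omega⟩ : ℤ)) :
    ∃ m : Fin v → ℕ, (∀ i, 0 < m i) ∧
      n = ∑ i, m i * g ^ (∑ j ∈ Finset.Ioi i, (Nat.digits g (m j)).length) ∧
      ∀ i, |((Nat.digits g (m i)).sum : ℤ) - (s i : ℤ)| ≤ ((g : ℤ) - 2) * (v - 1) := by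
  obtain ⟨w, rfl⟩ := Nat.exists_eq_add_one_of_ne_zero hv.ne'
  have hscale : ((g : ℤ) - 2) * ((w + 1 : ℕ) - 1 : ℤ) = w * (g - 2 : ℕ) := by
    push_cast [Nat.cast_sub hg]
    ring
  have hlast' : w * (g - 2) < s (Fin.last w) := by
    rw [hscale] at hlast
    exact_mod_cast hlast
  obtain ⟨m, hdigits, hhead⟩ := Nat.exists_digits_eq_flatten hg n (fun i => s i.castSucc) (by
    rw [Fin.sum_univ_castSucc] at hsum
    rw [Finset.sum_add_distrib, Finset.sum_const, Finset.card_univ, Fintype.card_fin, smul_eq_mul]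
    omega)
  have hsum' : ∑ i, (Nat.digits g (m i)).sum = ∑ i, s i := by
    rw [← hsum, hdigits, List.sum_flatten, List.map_reverse, List.sum_reverse, List.map_ofFn,
      List.sum_ofFn]
    rfl
  have hdev := Fin.abs_sub_le_of_sum_eq hsum' hhead
  have hpos : ∀ i, 0 < (Nat.digits g (m i)).sum := by
    refine Fin.lastCases ?_ fun j => (hs _).trans_le (hhead j).1
    have := abs_sub_le_iff.mp (hdev (Fin.last w))
    omega
  refine ⟨m, fun i => Nat.pos_of_ne_zero fun h => by simpa [h] using hpos i, ?_, fun i => ?_⟩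
  · rw [← Nat.ofDigits_digits g n, hdigits, Nat.ofDigits_flatten_reverse_ofFn]
    simp only [Nat.ofDigits_digits]
  · rw [hscale]
    exact hdev i
end

section
/- Let n and n_1, ..., n_v be positive integers such that the base-g representation of n is the concatenation of the base-g representations of n_1, ..., n_v, and suppose each n_i is a sum of t_i base-g Niven numbers. Then n is a sum of t_1 + ... + t_v base-g Niven numbers. -/
/-- `m` is a base-`g` Niven number. -/
def IsNiven (g m : ℕ) : Prop := 0 < m ∧ (Nat.digits g m).sum ∣ m

/-- `n` is the sum of `t` base-`g` Niven numbers. -/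
def IsSumOfNiven (g n t : ℕ) : Prop :=
  ∃ L : List ℕ, L.length = t ∧ (∀ m ∈ L, IsNiven g m) ∧ L.sum = n

/-!
In the concatenation, the block of `n_i` contributes `n_i * g ^ e_i`. Multiplying by a power of
the base only appends zero digits, so it keeps the digit sum and hence the Niven property; a
decomposition of `n_i` into `t_i` Niven numbers therefore shifts to one of `n_i * g ^ e_i`, and
these decompositions add up.
-/

lemma IsNiven.mul_pow {g x : ℕ} (hg : 1 < g) (h : IsNiven g x) (e : ℕ) :
    IsNiven g (x * g ^ e) := by
  obtain ⟨hx, hdvd⟩ := h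
  refine ⟨by positivity, ?_⟩
  rw [mul_comm, Nat.digits_base_pow_mul hg hx, List.sum_append, List.sum_replicate, smul_zero,
    zero_add]
  exact hdvd.mul_left _

lemma IsSumOfNiven.mul_pow {g n t : ℕ} (hg : 1 < g) (h : IsSumOfNiven g n t) (e : ℕ) :
    IsSumOfNiven g (n * g ^ e) t := by
  obtain ⟨L, hlen, hniv, rfl⟩ := h
  refine ⟨L.map (· * g ^ e), by simp [hlen], ?_, by simp [List.sum_map_mul_right]⟩
  simp only [List.mem_map, forall_exists_index, and_imp, forall_apply_eq_imp_iff₂]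
  exact fun x hx => (hniv x hx).mul_pow hg e

lemma IsSumOfNiven.zero (g : ℕ) : IsSumOfNiven g 0 0 :=
  ⟨[], rfl, by simp, rfl⟩

lemma IsSumOfNiven.add {g a b s t : ℕ} (ha : IsSumOfNiven g a s) (hb : IsSumOfNiven g b t) :
    IsSumOfNiven g (a + b) (s + t) := by
  obtain ⟨L, rfl, hL, rfl⟩ := ha
  obtain ⟨M, rfl, hM, rfl⟩ := hb
  refine ⟨L ++ M, List.length_append, ?_, List.sum_append⟩
  simp only [List.mem_append]
  rintro x (hx | hx)
  exacts [hL x hx, hM x hx]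

lemma IsSumOfNiven.sum {ι : Type*} {g : ℕ} (s : Finset ι) {a t : ι → ℕ}
    (h : ∀ i ∈ s, IsSumOfNiven g (a i) (t i)) :
    IsSumOfNiven g (∑ i ∈ s, a i) (∑ i ∈ s, t i) := by
  classical
  induction s using Finset.induction_on with
  | empty => exact IsSumOfNiven.zero g
  | insert i s hi ih =>
    rw [Finset.sum_insert hi, Finset.sum_insert hi]
    exact (h i (s.mem_insert_self i)).add (ih fun j hj => h j (Finset.mem_insert_of_mem hj))

theorem niven_join_general (g : ℕ) (hg : 2 ≤ g) (n : ℕ) (v : ℕ)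
    (m : Fin v → ℕ)
    (hcat : n = ∑ i, m i * g ^ (∑ j ∈ Finset.Ioi i, (Nat.digits g (m j)).length))
    (t : Fin v → ℕ) (ht : ∀ i, IsSumOfNiven g (m i) (t i)) :
    IsSumOfNiven g n (∑ i, t i) := by
  subst hcat
  exact IsSumOfNiven.sum _ fun i _ => (ht i).mul_pow hg _

/-- Lemma 2 (joining): if the base-`g` digit string of `n` is the concatenation of those of
`m 0, …, m (v-1)`, and each `m i` is a sum of `t i` base-`g` Niven numbers, then `n` is a
sum of `∑ i, t i` base-`g` Niven numbers. -/
theorem niven_join (g : ℕ) (hg : 2 ≤ g) (n : ℕ) (hn : 0 < n) (v : ℕ) (hv : 0 < v)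
    (m : Fin v → ℕ) (hm : ∀ i, 0 < m i)
    (hcat : n = ∑ i, m i * g ^ (∑ j ∈ Finset.Ioi i, (Nat.digits g (m j)).length))
    (t : Fin v → ℕ) (ht : ∀ i, IsSumOfNiven g (m i) (t i)) :
    IsSumOfNiven g n (∑ i, t i) :=
  niven_join_general g hg n v m hcat t ht
end

section
/- Let h be a positive integer, p a prime, and A ⊆ F_p. Then the set h^∧A of sums of h pairwise distinct elements of A satisfies |h^∧A| ≥ min{p, h|A| - h² + 1}. In particular, if |A| ≥ (p-1)/h + h, then h^∧A = F_p. -/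
/-!
Following Alon, Nathanson and Ruzsa: if `h^∧A` were contained in a set `C` of size
`E = min (p - 1) (h (|A| - h))`, the polynomial
`∏_{c ∈ C} (x₁ + ⋯ + x_h - c) · ∏_{i < j} (x_j - x_i)` would vanish at every point of `A^h`
(the first factor vanishes when the `x_i` are distinct, the Vandermonde factor when they are
not). Its total degree is `E + h(h-1)/2`, and its coefficient at `∏ x_i ^ t_i` equals that of
`(x₁ + ⋯ + x_h) ^ E · ∏_{i < j} (x_j - x_i)`, namely `E! / ∏ t_i! · ∏_{i < j} (t_j - t_i)`. For
distinct exponents `t_i < |A|` with `∑ t_i = E + h(h-1)/2` this is nonzero in `𝔽_p` because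
`E < p` and `t_i < p`, contradicting the Combinatorial Nullstellensatz.
-/

open MvPolynomial Finset Matrix Equiv Nat

section Coefficients

variable {R σ : Type*} [CommRing R]

theorem coeff_aeval_mul_eq_of_monic {q : Polynomial R} (hq : q.Monic) {S g : MvPolynomial σ R}
    (hS : S.totalDegree ≤ 1) {t : σ →₀ ℕ} (ht : q.natDegree + g.totalDegree ≤ t.degree) :
    coeff t (Polynomial.aeval S q * g) = coeff t (S ^ q.natDegree * g) := by
  rw [Polynomial.aeval_eq_sum_range, sum_mul, coeff_sum, sum_range_succ, hq.coeff_natDegree,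
    one_smul, sum_eq_zero, zero_add]
  intro j hj
  rw [smul_mul_assoc, coeff_smul, coeff_eq_zero_of_totalDegree_lt, smul_zero]
  calc (S ^ j * g).totalDegree ≤ j * S.totalDegree + g.totalDegree :=
        (totalDegree_mul _ _).trans (Nat.add_le_add_right (totalDegree_pow _ _) _)
    _ ≤ j + g.totalDegree := by gcongr; simpa using Nat.mul_le_mul_left j hS
    _ < t.degree := by rw [mem_range] at hj; omega

theorem prod_factorial_mul_coeff_sum_X_pow_mul_monomial [Fintype σ] (t u : σ →₀ ℕ) (m : ℕ)
    (hdeg : t.degree = m + u.degree) :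
    (∏ i, ((t i)! : R)) * coeff t ((∑ i, X i) ^ m * monomial u 1) =
      m ! * ∏ i, ((t i).descFactorial (u i) : R) := by
  classical
  rw [coeff_mul_monomial']
  split_ifs with hut
  · have hsub : (t - u).degree = m := by
      have := congrArg Finsupp.degree (tsub_add_cancel_of_le hut)
      rw [map_add] at this
      omega
    have hsum : (t - u).sum (fun _ k => k) = m := hsub
    rw [coeff_sum_X_pow_of_fintype, if_pos hsum, mul_one]
    have key : (∏ i, (t i)!) * (t - u).multinomial = m ! * ∏ i, (t i).descFactorial (u i) := by
      have hspec := Nat.multinomial_spec Finset.univ (t - u)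
      rw [← Finsupp.multinomial_eq_of_support_subset (subset_univ _),
        ← Finsupp.degree_eq_sum, hsub] at hspec
      rw [← hspec, Finset.prod_congr rfl fun i _ =>
        (Nat.factorial_mul_descFactorial (Finsupp.le_def.1 hut i)).symm, prod_mul_distrib]
      simp only [Finsupp.coe_tsub, Pi.sub_apply]
      ring
    exact_mod_cast congrArg (Nat.cast : ℕ → R) key
  · obtain ⟨i, hi⟩ : ∃ i, t i < u i := by
      simpa [Finsupp.le_def] using hut
    rw [mul_zero, prod_eq_zero (mem_univ i) (by rw [Nat.descFactorial_eq_zero_iff_lt.2 hi,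
      Nat.cast_zero]), mul_zero]

end Coefficients

section Vandermonde

variable {R : Type*} [CommRing R] {n : ℕ}

theorem det_vandermonde_X :
    (vandermonde (X : Fin n → MvPolynomial (Fin n) R)).det =
      ∑ σ : Perm (Fin n), (Perm.sign σ : ℤ) •
        monomial (Finsupp.equivFunOnFinite.symm fun i => (σ i : ℕ)) 1 := by
  rw [← det_transpose, det_apply]
  refine sum_congr rfl fun σ _ => ?_
  rw [Units.smul_def]
  congr 1
  simp only [transpose_apply, vandermonde_apply, monomial_eq, C_1, one_mul,
    Finsupp.prod_fintype _ _ (fun _ => pow_zero _), Finsupp.coe_equivFunOnFinite_symm]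

theorem degree_equivFunOnFinite_symm_perm (σ : Perm (Fin n)) :
    (Finsupp.equivFunOnFinite.symm fun i => (σ i : ℕ)).degree = ∑ i : Fin n, (i : ℕ) := by
  rw [Finsupp.degree_eq_sum]
  exact Equiv.sum_comp σ (fun i : Fin n => (i : ℕ))

theorem totalDegree_det_vandermonde_X_le :
    (vandermonde (X : Fin n → MvPolynomial (Fin n) R)).det.totalDegree ≤
      ∑ i : Fin n, (i : ℕ) := by
  rw [det_vandermonde_X]
  refine (totalDegree_finsetSum_le fun σ _ => ?_)
  refine (totalDegree_smul_le _ _).trans ((totalDegree_monomial_le _ _).trans_eq ?_)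
  exact degree_equivFunOnFinite_symm_perm σ

theorem eval_det_vandermonde_X (x : Fin n → R) :
    eval x (vandermonde (X : Fin n → MvPolynomial (Fin n) R)).det = (vandermonde x).det := by
  rw [RingHom.map_det]
  congr 1
  ext i j
  simp [vandermonde_apply]

theorem prod_factorial_mul_coeff_sum_X_pow_mul_det_vandermonde_X [IsDomain R]
    (t : Fin n →₀ ℕ) (m : ℕ)
    (hdeg : t.degree = m + ∑ i : Fin n, (i : ℕ)) :
    (∏ i, ((t i)! : R)) * coeff t ((∑ i, X i) ^ m * (vandermonde X).det) =
      m ! * (vandermonde fun i => (t i : R)).det := by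
  rw [det_vandermonde_X, mul_sum, coeff_sum, mul_sum,
    det_eval_matrixOfPolynomials_eq_det_vandermonde _ (fun j => descPochhammer R j)
      (fun j => descPochhammer_natDegree R j) (fun j => monic_descPochhammer R j),
    ← det_transpose, det_apply, mul_sum]
  refine sum_congr rfl fun σ _ => ?_
  rw [mul_smul_comm, coeff_smul, mul_smul_comm,
    prod_factorial_mul_coeff_sum_X_pow_mul_monomial _ _ _
      (by rw [hdeg, degree_equivFunOnFinite_symm_perm]),
    Units.smul_def, mul_smul_comm]
  simp only [transpose_apply, of_apply, descPochhammer_eval_eq_descFactorial,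
    Finsupp.coe_equivFunOnFinite_symm]

theorem coeff_sum_X_pow_mul_det_vandermonde_X_ne_zero {p : ℕ} [Fact p.Prime] (t : Fin n →₀ ℕ)
    (ht : Function.Injective t) (htp : ∀ i, t i < p) (m : ℕ) (hmp : m < p)
    (hdeg : t.degree = m + ∑ i : Fin n, (i : ℕ)) :
    coeff t ((∑ i, X i) ^ m * (vandermonde X).det : MvPolynomial (Fin n) (ZMod p)) ≠ 0 := by
  intro h0
  have key := prod_factorial_mul_coeff_sum_X_pow_mul_det_vandermonde_X (R := ZMod p) t m hdeg
  rw [h0, mul_zero, eq_comm] at key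
  rcases mul_eq_zero.1 key with hm | hdet
  · rw [ZMod.natCast_eq_zero_iff, (Fact.out : p.Prime).dvd_factorial] at hm
    omega
  · refine det_vandermonde_ne_zero_iff.2 (fun i j hij => ht ?_) hdet
    rwa [ZMod.natCast_eq_natCast_iff', Nat.mod_eq_of_lt (htp i),
      Nat.mod_eq_of_lt (htp j)] at hij

end Vandermonde

variable {n : ℕ}

theorem exists_injective_sum_notMem {F : Type*} [Field F] (A C : Finset F) (t : Fin n →₀ ℕ)
    (htA : ∀ i, t i < #A) (hdeg : t.degree = #C + ∑ i : Fin n, (i : ℕ))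
    (hcoeff : coeff t ((∑ i, X i) ^ #C * (vandermonde X).det : MvPolynomial (Fin n) F) ≠ 0) :
    ∃ x : Fin n → F, Function.Injective x ∧ (∀ i, x i ∈ A) ∧ ∑ i, x i ∉ C := by
  set S : MvPolynomial (Fin n) F := ∑ i, X i
  set Δ : MvPolynomial (Fin n) F := (vandermonde X).det
  have hS : S.totalDegree ≤ 1 :=
    totalDegree_finsetSum_le fun i _ => (totalDegree_X i).le
  have hΔ : Δ.totalDegree ≤ ∑ i : Fin n, (i : ℕ) := totalDegree_det_vandermonde_X_le
  set q : Polynomial F := ∏ c ∈ C, (Polynomial.X - Polynomial.C c)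
  have hq : q.Monic := Polynomial.monic_prod_of_monic _ _ fun c _ => Polynomial.monic_X_sub_C c
  have hqdeg : q.natDegree = #C := by
    rw [Polynomial.natDegree_prod_of_monic _ _ fun c _ => Polynomial.monic_X_sub_C c]
    simp
  have hP : ∏ c ∈ C, (S - MvPolynomial.C c) = Polynomial.aeval S q := by
    simp [q, map_prod, MvPolynomial.algebraMap_eq]
  have hcoeff' : coeff t (Polynomial.aeval S q * Δ) ≠ 0 := by
    rwa [coeff_aeval_mul_eq_of_monic hq hS (by omega), hqdeg]
  have htot : (Polynomial.aeval S q * Δ).totalDegree = t.degree := by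
    refine le_antisymm ?_ (le_totalDegree (mem_support_iff.2 hcoeff'))
    rw [← hP, hdeg]
    refine (totalDegree_mul _ _).trans (Nat.add_le_add ?_ hΔ)
    refine (totalDegree_finsetProd _ _).trans ?_
    simpa using sum_le_sum fun c (_ : c ∈ C) => (totalDegree_sub_C_le S c).trans hS
  obtain ⟨x, hxA, hx⟩ :=
    combinatorial_nullstellensatz_exists_eval_nonzero _ t hcoeff' htot (fun _ => A) htA
  rw [← hP, map_mul, eval_det_vandermonde_X, eval_prod] at hx
  refine ⟨x, det_vandermonde_ne_zero_iff.1 (right_ne_zero_of_mul hx), hxA, fun hxC => ?_⟩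
  refine left_ne_zero_of_mul hx (prod_eq_zero hxC ?_)
  simp [S]

def restrictedSumset {α : Type*} [DecidableEq α] [AddCommMonoid α] (h : ℕ) (A : Finset α) :
    Finset α :=
  (A.powersetCard h).image fun s => ∑ x ∈ s, x

theorem sum_mem_restrictedSumset {α : Type*} [DecidableEq α] [AddCommMonoid α] {A : Finset α}
    {x : Fin n → α} (hx : Function.Injective x) (hxA : ∀ i, x i ∈ A) :
    ∑ i, x i ∈ restrictedSumset n A := by
  refine mem_image.2 ⟨univ.map ⟨x, hx⟩, mem_powersetCard.2 ⟨?_, by simp⟩, by simp⟩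
  simpa [map_subset_iff_subset_preimage, subset_iff] using hxA

theorem lt_card_restrictedSumset {p : ℕ} [Fact p.Prime] (A : Finset (ZMod p))
    (t : Fin n →₀ ℕ) (ht : Function.Injective t) (htA : ∀ i, t i < #A) {E : ℕ} (hEp : E < p)
    (hdeg : t.degree = E + ∑ i : Fin n, (i : ℕ)) :
    E < #(restrictedSumset n A) := by
  by_contra! hcard
  obtain ⟨C, hsub, hC⟩ := exists_superset_card_eq hcard (by rw [ZMod.card]; omega)
  subst hC
  have htp : ∀ i, t i < p := fun i => (htA i).trans_le ((card_le_univ A).trans_eq (ZMod.card p))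
  obtain ⟨x, hx, hxA, hxC⟩ := exists_injective_sum_notMem A C t htA hdeg
    (coeff_sum_X_pow_mul_det_vandermonde_X_ne_zero t ht htp _ hEp hdeg)
  exact hxC (hsub (sum_mem_restrictedSumset hx hxA))

-- Hermite's identity.
theorem sum_range_add_div (E : ℕ) {h : ℕ} (hh : 0 < h) :
    ∑ i ∈ range h, (E + i) / h = E := by
  induction E with
  | zero =>
    exact sum_eq_zero fun i hi => Nat.div_eq_of_lt (by simpa using hi)
  | succ E ih =>
    have hshift := sum_range_succ' (fun i => (E + i) / h) h
    rw [sum_range_succ, ih, Nat.add_div_right _ hh, add_zero] at hshift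
    simp only [add_assoc, add_comm 1] at hshift ⊢
    omega

theorem exists_injective_lt_degree_eq {h k E : ℕ} (hE : E ≤ h * (k - h)) (hhk : h ≤ k) :
    ∃ t : Fin h →₀ ℕ, Function.Injective t ∧ (∀ i, t i < k) ∧
      t.degree = E + ∑ i : Fin h, (i : ℕ) := by
  refine ⟨Finsupp.equivFunOnFinite.symm fun i => i + (E + i) / h, ?_, fun i => ?_, ?_⟩
  · refine StrictMono.injective fun i j hij => ?_
    have : (E + i) / h ≤ (E + j) / h := Nat.div_le_div_right (by simp [hij.le])
    simp only [Finsupp.coe_equivFunOnFinite_symm]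
    omega
  · have hi := i.isLt
    have : (E + i) / h < k - h + 1 := by
      rw [Nat.div_lt_iff_lt_mul (by omega)]
      nlinarith
    simp only [Finsupp.coe_equivFunOnFinite_symm]
    omega
  · rw [Finsupp.degree_eq_sum, add_comm]
    simp only [Finsupp.coe_equivFunOnFinite_symm, sum_add_distrib]
    rcases Nat.eq_zero_or_pos h with rfl | hh
    · simp_all
    · rw [Fin.sum_univ_eq_sum_range (fun i => (E + i) / h), sum_range_add_div E hh]

theorem min_lt_card_restrictedSumset {p : ℕ} [Fact p.Prime] {h : ℕ} (A : Finset (ZMod p))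
    (hhA : h ≤ #A) : min (p - 1) (h * (#A - h)) < #(restrictedSumset h A) := by
  obtain ⟨t, ht, htA, hdeg⟩ := exists_injective_lt_degree_eq (min_le_right _ _) hhA
  exact lt_card_restrictedSumset A t ht htA
    ((min_le_left _ _).trans_lt (Nat.sub_lt (Fact.out : p.Prime).pos one_pos)) hdeg

theorem min_le_card_restrictedSumset {p : ℕ} [Fact p.Prime] (h : ℕ) (A : Finset (ZMod p)) :
    min (p : ℤ) (h * #A - h ^ 2 + 1) ≤ #(restrictedSumset h A) := by
  rcases le_or_gt h #A with hhA | hAh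
  · have hmin := min_lt_card_restrictedSumset A hhA
    zify [hhA, (Fact.out : p.Prime).one_le] at hmin
    rw [show (h : ℤ) * #A - h ^ 2 + 1 = h * (#A - h) + 1 by ring]
    omega
  · rw [restrictedSumset, powersetCard_eq_empty.2 hAh, image_empty, card_empty, Nat.cast_zero]
    refine (min_le_right _ _).trans ?_
    have : (#A : ℤ) + 1 ≤ h := by exact_mod_cast hAh
    nlinarith

theorem restrictedSumset_eq_univ {p : ℕ} [Fact p.Prime] {h : ℕ} (hh : 0 < h)
    {A : Finset (ZMod p)} (hA : ((p : ℚ) - 1) / h + h ≤ #A) : restrictedSumset h A = univ := by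
  have hp1 := (Fact.out : p.Prime).one_le
  have hhQ : (0 : ℚ) < h := by exact_mod_cast hh
  have hdiv : ((p : ℚ) - 1) / h ≤ #A - h := by linarith
  have hhA : h ≤ #A := by
    have : (0 : ℚ) ≤ ((p : ℚ) - 1) / h := div_nonneg (by simp [hp1]) hhQ.le
    exact_mod_cast (by linarith : (h : ℚ) ≤ #A)
  have hpA : p - 1 ≤ h * (#A - h) := by
    rw [div_le_iff₀ hhQ] at hdiv
    exact_mod_cast (by push_cast [hp1, hhA]; linarith : ((p - 1 : ℕ) : ℚ) ≤ (h * (#A - h) : ℕ))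
  have hmin := min_lt_card_restrictedSumset A hhA
  rw [min_eq_left hpA] at hmin
  have hle := card_le_univ (restrictedSumset h A)
  rw [ZMod.card] at hle
  exact eq_univ_of_card _ (by rw [ZMod.card]; omega)

/-- The Dias da Silva–Hamidoune theorem: for `A ⊆ 𝔽_p` and `h ≥ 1`, the set `h^∧A` of sums
of `h` pairwise distinct elements of `A` satisfies `|h^∧A| ≥ min{p, h|A| - h² + 1}`; in
particular, if `|A| ≥ (p-1)/h + h` then `h^∧A = 𝔽_p`. -/
theorem dias_da_silva_hamidoune (h p : ℕ) (hh : 0 < h) (hp : p.Prime) [NeZero p]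
    (A : Finset (ZMod p)) :
    min (p : ℤ) ((h : ℤ) * A.card - (h : ℤ) ^ 2 + 1) ≤
      (((A.powersetCard h).image (fun s => ∑ x ∈ s, x)).card : ℤ) ∧
    ((((p : ℚ) - 1) / h + h ≤ (A.card : ℚ)) →
      (A.powersetCard h).image (fun s => ∑ x ∈ s, x) = Finset.univ) := by
  have := Fact.mk hp
  exact ⟨min_le_card_restrictedSumset h A, restrictedSumset_eq_univ hh⟩
end

section
/- Let p be a prime, g ≥ 2 an integer, and n a positive integer with base-g digits d_0, ..., d_{ℓ-1}. Suppose there exists a subset J of the indices of nonzero digits of n with Σ_{i ∈ J} g^i ≡ n (mod p) and s_g(n) - |J| = p. Then m := n - Σ_{i ∈ J} g^i is a base-g Niven number with s_g(m) = p, and n is a sum of |J| + 1 base-g Niven numbers. -/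
open Finset

namespace Nat

theorem ofDigits_eq_sum_range_getD (b : ℕ) (L : List ℕ) :
    ofDigits b L = ∑ i ∈ range L.length, L.getD i 0 * b ^ i := by
  induction L with
  | nil => simp
  | cons d L ih =>
    rw [ofDigits_cons, ih, List.length_cons, sum_range_succ', mul_sum]
    simp only [List.getD_cons_succ, List.getD_cons_zero, pow_zero, mul_one]
    rw [add_comm]
    congr 1
    exact sum_congr rfl fun i _ => by ring

theorem getD_digits_lt_base {b : ℕ} (hb : 1 < b) (n i : ℕ) : (b.digits n).getD i 0 < b := by
  rcases lt_or_ge i (b.digits n).length with h | h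
  · rw [List.getD_eq_getElem _ _ h]
    exact digits_lt_base hb (List.getElem_mem h)
  · rw [List.getD_eq_default _ _ h]
    omega

theorem digits_sum_sum_range_mul_pow {b : ℕ} (hb : 1 < b) (k : ℕ) (f : ℕ → ℕ)
    (hf : ∀ i < k, f i < b) :
    (b.digits (∑ i ∈ range k, f i * b ^ i)).sum = ∑ i ∈ range k, f i := by
  induction k generalizing f with
  | zero => simp
  | succ k ih =>
    have ih' := ih (fun i => f (i + 1)) fun i hi => hf (i + 1) (by omega)
    have hsplit : ∑ i ∈ range (k + 1), f i * b ^ i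
        = f 0 + b * ∑ i ∈ range k, f (i + 1) * b ^ i := by
      rw [sum_range_succ', mul_sum, add_comm]
      simp only [pow_zero, mul_one, pow_succ]
      congr 1
      exact sum_congr rfl fun i _ => by ring
    rw [hsplit, sum_range_succ', add_comm (∑ i ∈ range k, f (i + 1))]
    by_cases hzero : f 0 = 0 ∧ ∑ i ∈ range k, f (i + 1) * b ^ i = 0
    · obtain ⟨h0, hrest⟩ := hzero
      rw [hrest, digits_zero, List.sum_nil] at ih'
      rw [h0, hrest, ← ih']
      simp
    · rw [digits_add b hb _ _ (hf 0 (by omega)) (by tauto), List.sum_cons, ih']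

theorem digits_sum_eq_sum_range_getD {b : ℕ} (hb : 1 < b) (n : ℕ) :
    (b.digits n).sum = ∑ i ∈ range (b.digits n).length, (b.digits n).getD i 0 := by
  conv_lhs => rw [← ofDigits_digits b n, ofDigits_eq_sum_range_getD]
  exact digits_sum_sum_range_mul_pow hb _ _ fun i _ => getD_digits_lt_base hb n i

theorem sum_range_ite_mem_mul_eq_sum {J : Finset ℕ} {k : ℕ} (hJ : J ⊆ range k)
    (f : ℕ → ℕ) :
    ∑ i ∈ range k, (if i ∈ J then 1 else 0) * f i = ∑ i ∈ J, f i := by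
  simp only [boole_mul]
  rw [sum_ite_mem, inter_eq_right.mpr hJ]

section NonzeroDigits

variable {b n : ℕ} {J : Finset ℕ}

theorem subset_range_length_digits_of_getD_ne_zero
    (hJ : ∀ i ∈ J, (b.digits n).getD i 0 ≠ 0) : J ⊆ range (b.digits n).length := by
  intro i hi
  rw [mem_range]
  by_contra h
  exact hJ i hi (List.getD_eq_default _ _ (by omega))

theorem ite_mem_le_getD_digits (hJ : ∀ i ∈ J, (b.digits n).getD i 0 ≠ 0) (i : ℕ) :
    (if i ∈ J then 1 else 0) ≤ (b.digits n).getD i 0 := by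
  split_ifs with hi
  exacts [Nat.one_le_iff_ne_zero.mpr (hJ i hi), Nat.zero_le _]

theorem sum_range_digits_sub_ite_mul_pow_add_sum_pow
    (hJ : ∀ i ∈ J, (b.digits n).getD i 0 ≠ 0) :
    ∑ i ∈ range (b.digits n).length, ((b.digits n).getD i 0 - if i ∈ J then 1 else 0) * b ^ i
      + ∑ i ∈ J, b ^ i = n := by
  rw [← sum_range_ite_mem_mul_eq_sum (subset_range_length_digits_of_getD_ne_zero hJ),
    ← sum_add_distrib]
  simp only [← add_mul, Nat.sub_add_cancel (ite_mem_le_getD_digits hJ _)]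
  rw [← ofDigits_eq_sum_range_getD, ofDigits_digits]

theorem sum_pow_le_of_getD_digits_ne_zero (hJ : ∀ i ∈ J, (b.digits n).getD i 0 ≠ 0) :
    ∑ i ∈ J, b ^ i ≤ n :=
  (Nat.le_add_left _ _).trans_eq (sum_range_digits_sub_ite_mul_pow_add_sum_pow hJ)

theorem digits_sum_sub_sum_pow_add_card (hb : 1 < b)
    (hJ : ∀ i ∈ J, (b.digits n).getD i 0 ≠ 0) :
    (b.digits (n - ∑ i ∈ J, b ^ i)).sum + J.card = (b.digits n).sum := by
  have hcard := sum_range_ite_mem_mul_eq_sum (subset_range_length_digits_of_getD_ne_zero hJ)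
    fun _ => 1
  simp only [mul_one, sum_const, smul_eq_mul] at hcard
  rw [← Nat.eq_sub_of_add_eq (sum_range_digits_sub_ite_mul_pow_add_sum_pow hJ),
    digits_sum_sum_range_mul_pow hb _ _
      fun i _ => (Nat.sub_le _ _).trans_lt (getD_digits_lt_base hb n i),
    digits_sum_eq_sum_range_getD hb n, ← hcard, ← sum_add_distrib]
  exact sum_congr rfl fun i _ => Nat.sub_add_cancel (ite_mem_le_getD_digits hJ i)

end NonzeroDigits

end Nat

theorem isNiven_pow {g : ℕ} (hg : 1 < g) (i : ℕ) : IsNiven g (g ^ i) := by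
  refine ⟨pow_pos (by omega) i, ?_⟩
  have := Nat.digits_base_pow_mul (k := i) hg one_pos
  rw [mul_one] at this
  simp [this, Nat.digits_of_lt g 1 one_ne_zero hg]

theorem IsNiven.isSumOfNiven_add_sum_pow {g m : ℕ} (hg : 1 < g) (hm : IsNiven g m)
    (J : Finset ℕ) : IsSumOfNiven g (m + ∑ i ∈ J, g ^ i) (J.card + 1) := by
  refine ⟨m :: J.toList.map (g ^ ·), by simp, ?_, by simp [sum_map_toList]⟩
  simp only [List.mem_cons, List.mem_map]
  rintro _ (rfl | ⟨i, -, rfl⟩)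
  exacts [hm, isNiven_pow hg i]

theorem niven_subtract_powers_general (g : ℕ) (hg : 2 ≤ g) (p : ℕ) (hp : p.Prime)
    (n : ℕ) (J : Finset ℕ)
    (hJ : ∀ i ∈ J, (Nat.digits g n).getD i 0 ≠ 0)
    (hcong : (∑ i ∈ J, g ^ i) ≡ n [MOD p])
    (hcard : (Nat.digits g n).sum = p + J.card) :
    IsNiven g (n - ∑ i ∈ J, g ^ i) ∧
    (Nat.digits g (n - ∑ i ∈ J, g ^ i)).sum = p ∧
    IsSumOfNiven g n (J.card + 1) := by
  have hle := Nat.sum_pow_le_of_getD_digits_ne_zero hJ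
  have hsum : (Nat.digits g (n - ∑ i ∈ J, g ^ i)).sum = p := by
    have := Nat.digits_sum_sub_sum_pow_add_card hg hJ
    omega
  have hpos : 0 < n - ∑ i ∈ J, g ^ i :=
    Nat.pos_of_ne_zero fun h => hp.ne_zero (by rw [← hsum, h, Nat.digits_zero, List.sum_nil])
  have hniven : IsNiven g (n - ∑ i ∈ J, g ^ i) :=
    ⟨hpos, hsum ▸ (Nat.modEq_iff_dvd' hle).mp hcong⟩
  refine ⟨hniven, hsum, ?_⟩
  simpa [Nat.sub_add_cancel hle] using hniven.isSumOfNiven_add_sum_pow hg J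

/-- If `J` is a set of positions of nonzero base-`g` digits of `n` with
`∑_{i ∈ J} g^i ≡ n (mod p)` and `s_g(n) - |J| = p`, then `m = n - ∑_{i ∈ J} g^i` is a
base-`g` Niven number with `s_g(m) = p`, and `n` is a sum of `|J| + 1` Niven numbers. -/
theorem niven_subtract_powers (g : ℕ) (hg : 2 ≤ g) (p : ℕ) (hp : p.Prime)
    (n : ℕ) (hn : 0 < n) (J : Finset ℕ)
    (hJ : ∀ i ∈ J, (Nat.digits g n).getD i 0 ≠ 0)
    (hcong : (∑ i ∈ J, g ^ i) ≡ n [MOD p])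
    (hcard : (Nat.digits g n).sum = p + J.card) :
    IsNiven g (n - ∑ i ∈ J, g ^ i) ∧
    (Nat.digits g (n - ∑ i ∈ J, g ^ i)).sum = p ∧
    IsSumOfNiven g n (J.card + 1) :=
  niven_subtract_powers_general g hg p hp n J hJ hcong hcard
end

section
/- Let g ≥ 2 and let q > 0 and r be integers. The set S_{q,r} of positive integers n satisfying (S1) s_g(n) ≡ r (mod q) and (S2) for all positive integers m such that [m]_g is a substring of [n]_g and ℓ_g(m) ≥ 36 log ℓ_g(n), one has s_g(m) > (g-1)/3 · ℓ_g(m), has positive lower asymptotic density; in fact its lower density is at least 1/(2g^{q+1}). -/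
/-!
Among the numbers with `N + 1` digits, at least `(g - 1) g ^ (N - q)` have digit sum
`≡ r (mod q)`: prepend to any number with `N + 1 - q` digits a suitable block of `q` digits `0`
and `1`. Such a number can only fail (S2) through a window of `t ≥ 36 log (N + 1)` consecutive
digits of average at most `(g - 1) / 3`. An exponential Markov inequality (pairing the digits `d`
and `g - 1 - d` and using `cosh x ≤ exp (x ^ 2 / 2)`) shows that at most `(g e^(-1/24)) ^ ℓ`
strings of `ℓ` digits have digit sum `≤ (g - 1) ℓ / 3`. Summing over positions and lengths, such
windows occur in at most `25 (N + 1) g ^ (N + 1) e^(-t/24) ≤ 25 g ^ (N + 1) / √(N + 1)` numbers,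
which is negligible for large `N`. Summing the remaining counts over the blocks below `x` gives
the density `1 / (2 g ^ (q + 1))`.
-/

open Finset Real

namespace Nat

theorem sum_digits_add_base_pow_mul {b k a h : ℕ} (hb : 1 < b) (ha : a < b ^ k) :
    (b.digits (a + b ^ k * h)).sum = (b.digits a).sum + (b.digits h).sum := by
  rcases h.eq_zero_or_pos with rfl | hh
  · simp
  have hlen : (b.digits a).length ≤ k := (digits_length_le_iff hb a).2 ha
  rw [← Nat.add_sub_cancel' hlen, ← digits_append_zeroes_append_digits hb hh]
  simp

theorem eq_mod_add_pow_mul_window (b n i ℓ : ℕ) :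
    n = n % b ^ i + b ^ i * (n / b ^ i % b ^ ℓ + b ^ ℓ * (n / b ^ (i + ℓ))) := by
  rw [pow_add, ← Nat.div_div_eq_div_mul, Nat.mod_add_div, Nat.mod_add_div]

theorem sum_digits_window {b n : ℕ} (hb : 1 < b) {u w v : List ℕ}
    (h : b.digits n = u ++ w ++ v) :
    (b.digits (n / b ^ u.length % b ^ w.length)).sum = w.sum := by
  have hlt : ∀ x ∈ b.digits n, x < b := fun x hx => digits_lt_base hb hx
  have hu : ∀ x ∈ u, x < b := fun x hx => hlt x (by simp [h, hx])
  have hw : ∀ x ∈ w, x < b := fun x hx => hlt x (by simp [h, hx])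
  have hn : n = ofDigits b u + b ^ u.length * (ofDigits b w + b ^ w.length * ofDigits b v) := by
    conv_lhs => rw [← ofDigits_digits b n, h]
    rw [List.append_assoc, ofDigits_append, ofDigits_append]
  have hwin : n / b ^ u.length % b ^ w.length = ofDigits b w := by
    rw [hn, Nat.add_mul_div_left _ _ (by positivity), Nat.div_eq_of_lt
      (ofDigits_lt_base_pow_length hb hu), zero_add, Nat.add_mul_mod_self_left,
      Nat.mod_eq_of_lt (ofDigits_lt_base_pow_length hb hw)]
  rw [hwin, sum_digits_ofDigits_eq_sum hb (l := w.length) ⟨rfl, hw⟩]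

theorem sum_range_pow_sum_digits {R : Type*} [CommSemiring R] {b : ℕ} (hb : 1 < b) (y : R)
    (ℓ : ℕ) : ∑ m ∈ range (b ^ ℓ), y ^ (b.digits m).sum = (∑ d ∈ range b, y ^ d) ^ ℓ := by
  have hlists : ∀ ℓ, ∑ L ∈ List.fixedLengthDigits hb ℓ, y ^ L.sum =
      (∑ d ∈ range b, y ^ d) ^ ℓ := by
    intro ℓ
    induction ℓ with
    | zero => simp
    | succ ℓ ih =>
      rw [List.fixedLengthDigits_succ_eq_disjiUnion, sum_disjiUnion, _root_.pow_succ', sum_mul]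
      refine sum_congr rfl fun d _ => ?_
      simp [List.consFixedLengthDigits, sum_image, pow_add, ← mul_sum, ih]
  rw [← hlists]
  refine (sum_nbij (ofDigits b) (bijOn_ofDigits' hb ℓ).1 (bijOn_ofDigits' hb ℓ).2.1
    (bijOn_ofDigits' hb ℓ).2.2 fun L hL => ?_).symm
  rw [sum_digits_ofDigits_eq_sum hb ((List.mem_fixedLengthDigits_iff hb).mp hL)]

end Nat

theorem card_filter_sum_digits_modEq_ge {g : ℕ} (hg : 1 < g) {q : ℕ} (hq : 0 < q) (r : ℤ)
    (L : ℕ) :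
    (g - 1) * g ^ L ≤
      #{n ∈ Ico (g ^ (q + L)) (g ^ (q + L + 1)) | ((g.digits n).sum : ℤ) ≡ r [ZMOD q]} := by
  -- `a h + g ^ q * h` is `h` preceded by the `q` digits `1, …, 1, 0, …, 0` with `s h` ones,
  -- which corrects the digit sum of `h` to the residue `r`
  set s : ℕ → ℕ := fun h => ((r - (g.digits h).sum) % q).toNat
  set a : ℕ → ℕ := fun h => Nat.ofDigits g (List.replicate (s h) 1)
  have hs : ∀ h, (s h : ℤ) = (r - (g.digits h).sum) % q := fun h =>
    Int.toNat_of_nonneg (Int.emod_nonneg _ (by exact_mod_cast hq.ne'))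
  have hs_lt : ∀ h, s h < q := fun h => by
    have := Int.emod_lt_of_pos (r - (g.digits h).sum) (by exact_mod_cast hq : (0 : ℤ) < q)
    have := hs h
    omega
  have ha_mem : ∀ h, ∀ x ∈ List.replicate (s h) 1, x < g := fun h x hx => by
    rw [List.eq_of_mem_replicate hx]; exact hg
  have ha_lt : ∀ h, a h < g ^ q := fun h =>
    (List.length_replicate (n := s h) ▸ Nat.ofDigits_lt_base_pow_length hg (ha_mem h)).trans_le
      (Nat.pow_le_pow_right (by omega) (hs_lt h).le)
  have ha_sum : ∀ h, (g.digits (a h)).sum = s h := fun h => by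
    rw [Nat.sum_digits_ofDigits_eq_sum hg ⟨rfl, ha_mem h⟩, List.sum_replicate, smul_eq_mul,
      mul_one]
  have hcard : #(Ico (g ^ L) (g ^ (L + 1))) = (g - 1) * g ^ L := by
    rw [Nat.card_Ico, pow_succ, ← Nat.mul_sub_one, mul_comm]
  rw [← hcard]
  refine card_le_card_of_injOn (fun h => a h + g ^ q * h) (fun h hh => ?_)
    (fun h₁ _ h₂ _ heq => ?_)
  · simp only [coe_Ico, Set.mem_Ico, coe_filter, mem_Ico, Set.mem_ofPred_eq] at hh ⊢
    refine ⟨⟨?_, ?_⟩, ?_⟩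
    · rw [pow_add]
      exact (Nat.mul_le_mul_left _ hh.1).trans (Nat.le_add_left _ _)
    · calc a h + g ^ q * h < g ^ q * (h + 1) := by have := ha_lt h; rw [mul_add_one]; omega
        _ ≤ g ^ (q + L + 1) := by
          rw [add_assoc, pow_add]; exact Nat.mul_le_mul_left _ hh.2
    · rw [Nat.sum_digits_add_base_pow_mul hg (ha_lt h), ha_sum, Nat.cast_add, hs]
      simpa using (Int.mod_modEq (r - (g.digits h).sum) q).add_right ((g.digits h).sum : ℤ)
  · have key : ∀ h, (a h + g ^ q * h) / g ^ q = h := fun h => by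
      rw [Nat.add_mul_div_left _ _ (by positivity), Nat.div_eq_of_lt (ha_lt h), zero_add]
    rw [← key h₁, ← key h₂]
    exact congrArg (· / g ^ q) heq

theorem sum_range_exp_mul_sub_le (n : ℕ) (β : ℝ) :
    ∑ d ∈ range n, exp (β * ((n - 1) / 2 - d)) ≤ n * exp ((β * ((n - 1) / 2)) ^ 2 / 2) := by
  set c : ℝ := (n - 1) / 2
  -- the reflection `d ↦ n - 1 - d` turns the sum into a sum of `cosh`
  have hrefl : ∑ d ∈ range n, exp (β * (c - d)) = ∑ d ∈ range n, exp (-(β * (c - d))) := by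
    rw [← sum_range_reflect]
    refine sum_congr rfl fun d hd => ?_
    rw [Nat.cast_sub (by simp at hd; omega), Nat.cast_sub (by simp at hd; omega)]
    congr 1
    simp only [c]
    push_cast
    ring
  have hcosh : ∑ d ∈ range n, exp (β * (c - d)) = ∑ d ∈ range n, cosh (β * (c - d)) := by
    simp_rw [cosh_eq]
    rw [← sum_div, sum_add_distrib, ← hrefl]
    ring
  rw [hcosh]
  calc ∑ d ∈ range n, cosh (β * (c - d))
      ≤ ∑ _d ∈ range n, exp ((β * c) ^ 2 / 2) := by
        refine sum_le_sum fun d hd => (cosh_le_exp_half_sq _).trans (exp_le_exp.2 ?_)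
        have hd : (d : ℝ) + 1 ≤ n := by exact_mod_cast mem_range.1 hd
        have : (0 : ℝ) ≤ d := d.cast_nonneg
        simp only [c]
        nlinarith [mul_nonneg (mul_nonneg this (by linarith : (0 : ℝ) ≤ n - 1 - d)) (sq_nonneg β)]
    _ = n * exp ((β * c) ^ 2 / 2) := by simp

theorem card_filter_sum_digits_le {g : ℕ} (hg : 2 ≤ g) (ℓ : ℕ) :
    (#{m ∈ range (g ^ ℓ) | 3 * (g.digits m).sum ≤ (g - 1) * ℓ} : ℝ) ≤
      (g * exp (-(1 / 24))) ^ ℓ := by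
  have hg1 : (1 : ℝ) ≤ g - 1 := by
    have : (2 : ℝ) ≤ g := by exact_mod_cast hg
    linarith
  set β : ℝ := 1 / (3 * (g - 1))
  have hβ : 0 < β := by positivity
  have hβg : β * (g - 1) = 1 / 3 := by simp only [β]; field_simp
  have hterm : ∀ m ∈ range (g ^ ℓ), 3 * (g.digits m).sum ≤ (g - 1) * ℓ →
      (1 : ℝ) ≤ exp (1 / 9) ^ ℓ * exp (-β) ^ (g.digits m).sum := by
    intro m _ hm
    have hm' : 3 * ((g.digits m).sum : ℝ) ≤ (g - 1) * ℓ := by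
      rw [← Nat.cast_pred (by omega)]
      exact_mod_cast hm
    rw [← exp_nat_mul, ← exp_nat_mul, ← exp_add]
    refine one_le_exp ?_
    nlinarith
  have hdigit : exp (1 / 9) * ∑ d ∈ range g, exp (-β) ^ d ≤ g * exp (-(1 / 24)) := by
    have := sum_range_exp_mul_sub_le g β
    rw [mul_sum]
    calc ∑ d ∈ range g, exp (1 / 9) * exp (-β) ^ d
        = exp (-(1 / 18)) * ∑ d ∈ range g, exp (β * ((g - 1) / 2 - d)) := by
          rw [mul_sum]
          refine sum_congr rfl fun d _ => ?_
          rw [← exp_nat_mul, ← exp_add, ← exp_add]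
          congr 1
          linear_combination (-1 / 2 : ℝ) * hβg
      _ ≤ exp (-(1 / 18)) * (g * exp ((β * ((g - 1) / 2)) ^ 2 / 2)) := by gcongr
      _ = g * exp (-(1 / 24)) := by
          rw [show β * ((g - 1) / 2) = 1 / 6 by linear_combination hβg / 2, mul_left_comm,
            ← exp_add]
          norm_num
  calc (#{m ∈ range (g ^ ℓ) | 3 * (g.digits m).sum ≤ (g - 1) * ℓ} : ℝ)
      ≤ ∑ m ∈ range (g ^ ℓ), exp (1 / 9) ^ ℓ * exp (-β) ^ (g.digits m).sum := by
        rw [card_eq_sum_ones, Nat.cast_sum, sum_filter]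
        refine sum_le_sum fun m hm => ?_
        split_ifs with h
        · exact_mod_cast hterm m hm h
        · positivity
    _ = (exp (1 / 9) * ∑ d ∈ range g, exp (-β) ^ d) ^ ℓ := by
        rw [← mul_sum, Nat.sum_range_pow_sum_digits (by omega), mul_pow]
    _ ≤ (g * exp (-(1 / 24))) ^ ℓ := by gcongr

theorem card_filter_window_le {g : ℕ} (hg : 0 < g) (P : ℕ → Prop) [DecidablePred P]
    {N i ℓ : ℕ} (h : i + ℓ ≤ N) :
    #{n ∈ range (g ^ N) | P (n / g ^ i % g ^ ℓ)} ≤ #{v ∈ range (g ^ ℓ) | P v} * g ^ (N - ℓ) := by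
  have hpos : ∀ k, 0 < g ^ k := fun k => by positivity
  have hN : g ^ (N - ℓ) = g ^ i * g ^ (N - i - ℓ) := by rw [← pow_add]; congr 1; omega
  calc _ ≤ #({v ∈ range (g ^ ℓ) | P v} ×ˢ (range (g ^ i) ×ˢ range (g ^ (N - i - ℓ)))) :=
        card_le_card_of_injOn (fun n => (n / g ^ i % g ^ ℓ, n % g ^ i, n / g ^ (i + ℓ)))
          (fun n hn => ?_) (fun n₁ _ n₂ _ heq => ?_)
    _ = _ := by rw [card_product, card_product, card_range, card_range, hN]
  · simp only [coe_filter, mem_range, Set.mem_ofPred_eq] at hn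
    simp only [coe_product, coe_filter, mem_range, Set.mem_prod, Set.mem_ofPred_eq, coe_range,
      Set.mem_Iio]
    refine ⟨⟨Nat.mod_lt _ (hpos ℓ), hn.2⟩, Nat.mod_lt _ (hpos i), ?_⟩
    rw [Nat.div_lt_iff_lt_mul (hpos _), ← pow_add, show N - i - ℓ + (i + ℓ) = N by omega]
    exact hn.1
  · simp only [Prod.mk.injEq] at heq
    rw [Nat.eq_mod_add_pow_mul_window g n₁ i ℓ, Nat.eq_mod_add_pow_mul_window g n₂ i ℓ,
      heq.1, heq.2.1, heq.2.2]

def HasLowSumWindow (g t n : ℕ) : Prop :=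
  ∃ w : List ℕ, w <:+: g.digits n ∧ t ≤ w.length ∧ 3 * w.sum ≤ (g - 1) * w.length

theorem exp_neg_one_div_24_le : exp (-(1 / 24)) ≤ 24 / 25 := by
  rw [exp_neg, inv_le_comm₀ (exp_pos _) (by norm_num)]
  have := add_one_le_exp (1 / 24 : ℝ)
  norm_num at this ⊢
  linarith

open scoped Classical in
theorem card_filter_hasLowSumWindow_le {g : ℕ} (hg : 2 ≤ g) {N t : ℕ} (ht : 0 < t) :
    (#{n ∈ range (g ^ N) | HasLowSumWindow g t n} : ℝ) ≤
      25 * N * g ^ N * exp (-(1 / 24)) ^ t := by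
  set ρ := exp (-(1 / 24))
  set W : ℕ × ℕ → Finset ℕ := fun p =>
    {n ∈ range (g ^ N) | 3 * (g.digits (n / g ^ p.2 % g ^ p.1)).sum ≤ (g - 1) * p.1}
  set P := {p ∈ Ico t (N + 1) ×ˢ range N | p.2 + p.1 ≤ N}
  have hcover : {n ∈ range (g ^ N) | HasLowSumWindow g t n} ⊆ P.biUnion W := by
    intro n hn
    simp only [mem_filter, mem_range] at hn
    obtain ⟨hn, w, ⟨u, v, huwv⟩, hlen, hsum⟩ := hn
    have hN : u.length + w.length + v.length ≤ N := by
      rw [← List.length_append, ← List.length_append, huwv]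
      exact (Nat.digits_length_le_iff (by omega) n).2 hn
    simp only [P, W, mem_biUnion, mem_filter, mem_product, mem_Ico, mem_range]
    refine ⟨(w.length, u.length), ⟨⟨⟨hlen, by omega⟩, by omega⟩, by omega⟩, hn, ?_⟩
    rwa [Nat.sum_digits_window (by omega) huwv.symm]
  have hW : ∀ p ∈ P, (#(W p) : ℝ) ≤ g ^ N * ρ ^ p.1 := by
    intro p hp
    simp only [P, mem_filter] at hp
    calc (#(W p) : ℝ)
        ≤ #{v ∈ range (g ^ p.1) | 3 * (g.digits v).sum ≤ (g - 1) * p.1} *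
            (g : ℝ) ^ (N - p.1) := by
          exact_mod_cast card_filter_window_le (by omega : 0 < g)
            (fun v => 3 * (g.digits v).sum ≤ (g - 1) * p.1) hp.2
      _ ≤ (g * ρ) ^ p.1 * (g : ℝ) ^ (N - p.1) := by
          gcongr; exact card_filter_sum_digits_le hg p.1
      _ = g ^ N * ρ ^ p.1 := by
          rw [mul_pow, mul_right_comm, ← pow_add, Nat.add_sub_cancel' (by omega), mul_comm]
  have hρ : 0 ≤ ρ := (exp_pos _).le
  have hρ25 : ρ ≤ 24 / 25 := exp_neg_one_div_24_le
  calc (#{n ∈ range (g ^ N) | HasLowSumWindow g t n} : ℝ)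
      ≤ ∑ p ∈ P, (#(W p) : ℝ) := by
        exact_mod_cast (card_le_card hcover).trans card_biUnion_le
    _ ≤ ∑ p ∈ Ico t (N + 1) ×ˢ range N, (g : ℝ) ^ N * ρ ^ p.1 :=
        (sum_le_sum hW).trans (sum_le_sum_of_subset_of_nonneg (filter_subset _ _)
          fun _ _ _ => by positivity)
    _ = N * g ^ N * ∑ ℓ ∈ Ico t (N + 1), ρ ^ ℓ := by
        rw [sum_product, mul_sum]
        simp only [sum_const, card_range, nsmul_eq_mul]
        exact sum_congr rfl fun _ _ => by ring
    _ ≤ N * g ^ N * (ρ ^ t / (1 - ρ)) := by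
        gcongr; exact geom_sum_Ico_le_of_lt_one hρ (by linarith)
    _ ≤ N * g ^ N * (25 * ρ ^ t) := by
        gcongr
        rw [div_le_iff₀ (by linarith)]
        nlinarith [pow_nonneg hρ t]
    _ = 25 * N * g ^ N * ρ ^ t := by ring

theorem mul_exp_neg_pow_ceil_log_le {N K : ℕ} (hK : 0 < K) (hKN : K ^ 2 ≤ N) :
    N * exp (-(1 / 24)) ^ ⌈36 * log N⌉₊ ≤ 1 / K := by
  have hN : (0 : ℝ) < N := by exact_mod_cast (pow_pos hK 2).trans_le hKN
  have hlogK : 2 * log K ≤ log N := by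
    have := log_le_log (by positivity) (by exact_mod_cast hKN : (K : ℝ) ^ 2 ≤ N)
    rwa [log_pow, Nat.cast_two] at this
  have ht : 36 * log N ≤ ⌈36 * log N⌉₊ := Nat.le_ceil _
  calc N * exp (-(1 / 24)) ^ ⌈36 * log N⌉₊
      = exp (log N + ⌈36 * log N⌉₊ * (-(1 / 24))) := by
        rw [exp_add, exp_log hN, exp_nat_mul]
    _ ≤ exp (-log K) := exp_le_exp.2 (by linarith)
    _ = 1 / K := by rw [exp_neg, exp_log (by positivity), one_div]

def Sqr (g q : ℕ) (r : ℤ) : Set ℕ :=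
  {n : ℕ | 0 < n ∧ ((Nat.digits g n).sum : ℤ) ≡ r [ZMOD (q : ℤ)] ∧
    ∀ m : ℕ, 0 < m → (Nat.digits g m) <:+: (Nat.digits g n) →
      36 * Real.log ((Nat.digits g n).length) ≤ ((Nat.digits g m).length : ℝ) →
      (g - 1) * (Nat.digits g m).length < 3 * (Nat.digits g m).sum}

theorem mem_Sqr_of_not_hasLowSumWindow {g q N n : ℕ} {r : ℤ} (hg : 1 < g)
    (hn : n ∈ Ico (g ^ N) (g ^ (N + 1))) (hmod : ((g.digits n).sum : ℤ) ≡ r [ZMOD q])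
    (hlow : ¬HasLowSumWindow g ⌈36 * log (N + 1)⌉₊ n) : n ∈ Sqr g q r := by
  rw [mem_Ico] at hn
  have hn0 : 0 < n := (Nat.pow_pos (by omega)).trans_le hn.1
  have hlen : (g.digits n).length = N + 1 := by
    rw [Nat.length_digits g n (by omega) hn0.ne', Nat.log_eq_of_pow_le_of_lt_pow hn.1 hn.2]
  refine ⟨hn0, hmod, fun m _ hmn hm => ?_⟩
  by_contra! hsum
  refine hlow ⟨g.digits m, hmn, Nat.ceil_le.2 ?_, hsum⟩
  rwa [hlen, Nat.cast_add_one] at hm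

open scoped Classical in
theorem card_Sqr_inter_Ico_pow_ge {g q : ℕ} (hg : 2 ≤ g) (hq : 0 < q) (r : ℤ) {N : ℕ}
    (hN : (100 * g ^ (q + 1)) ^ 2 ≤ N) :
    3 * (g - 1) * (g : ℝ) ^ N ≤ 4 * g ^ q * #{n ∈ Ico (g ^ N) (g ^ (N + 1)) | n ∈ Sqr g q r} := by
  -- `K` is large enough for the numbers with a low-sum window to be at most a quarter of the
  -- residue class
  set K := 100 * g ^ (q + 1)
  set t := ⌈36 * log ((N + 1 : ℕ) : ℝ)⌉₊
  have hK : 0 < K := by positivity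
  obtain ⟨L, rfl⟩ : ∃ L, N = q + L := by
    refine Nat.exists_eq_add_of_le ?_
    have := Nat.lt_pow_self (n := q + 1) (by omega : 1 < g)
    have := Nat.le_self_pow two_ne_zero K
    omega
  have ht : 0 < t := Nat.ceil_pos.2 (mul_pos (by norm_num) (log_pos (by norm_cast; omega)))
  set A := {n ∈ Ico (g ^ (q + L)) (g ^ (q + L + 1)) | ((g.digits n).sum : ℤ) ≡ r [ZMOD q]}
  set B := {n ∈ range (g ^ (q + L + 1)) | HasLowSumWindow g t n}
  have hAB : A ⊆ {n ∈ Ico (g ^ (q + L)) (g ^ (q + L + 1)) | n ∈ Sqr g q r} ∪ B := by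
    intro n hn
    simp only [A, B, mem_union, mem_filter, mem_range, mem_Ico] at hn ⊢
    by_cases hlow : HasLowSumWindow g t n
    · exact Or.inr ⟨hn.1.2, hlow⟩
    · refine Or.inl ⟨hn.1, mem_Sqr_of_not_hasLowSumWindow (by omega) (mem_Ico.2 hn.1) hn.2 ?_⟩
      simpa [t] using hlow
  have hA : ((g - 1) * g ^ L : ℝ) ≤ #A := by
    rw [← Nat.cast_pred (by omega), ← Nat.cast_pow, ← Nat.cast_mul]
    exact Nat.cast_le.2 (card_filter_sum_digits_modEq_ge (by omega) hq r L)
  have hB : (#B : ℝ) ≤ 25 * g ^ (q + L + 1) / K := by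
    calc (#B : ℝ) ≤ 25 * (q + L + 1 : ℕ) * g ^ (q + L + 1) * exp (-(1 / 24)) ^ t :=
          card_filter_hasLowSumWindow_le hg ht
      _ = 25 * g ^ (q + L + 1) * ((q + L + 1 : ℕ) * exp (-(1 / 24)) ^ t) := by ring
      _ ≤ 25 * g ^ (q + L + 1) * (1 / K) := by
          gcongr; exact mul_exp_neg_pow_ceil_log_le hK (by omega)
      _ = 25 * g ^ (q + L + 1) / K := by ring
  have hcard : (#A : ℝ) ≤ #{n ∈ Ico (g ^ (q + L)) (g ^ (q + L + 1)) | n ∈ Sqr g q r} + #B := by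
    exact_mod_cast (card_le_card hAB).trans (card_union_le _ _)
  have hKB : 4 * (g : ℝ) ^ q * (25 * g ^ (q + L + 1) / K) = g ^ (q + L) := by
    simp only [K]; push_cast; field_simp; ring
  have hg1 : (1 : ℝ) ≤ g - 1 := by
    have : (2 : ℝ) ≤ g := by exact_mod_cast hg
    linarith
  have hgq : (0 : ℝ) ≤ 4 * g ^ q := by positivity
  have hgL : (g : ℝ) ^ (q + L) ≤ (g - 1) * g ^ (q + L) :=
    le_mul_of_one_le_left (by positivity) hg1
  have hA' := mul_le_mul_of_nonneg_left hA hgq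
  have hB' := mul_le_mul_of_nonneg_left hB hgq
  have hcard' := mul_le_mul_of_nonneg_left hcard hgq
  rw [hKB] at hB'
  rw [pow_add] at hgL hB' ⊢
  linarith

open scoped Classical in
theorem card_Sqr_inter_Ico_pow_pow_ge {g q : ℕ} (hg : 2 ≤ g) (hq : 0 < q) (r : ℤ) {a b : ℕ}
    (ha : (100 * g ^ (q + 1)) ^ 2 ≤ a) (hab : a ≤ b) :
    3 * ((g : ℝ) ^ b - g ^ a) ≤ 4 * g ^ q * #{n ∈ Ico (g ^ a) (g ^ b) | n ∈ Sqr g q r} := by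
  induction b, hab using Nat.le_induction with
  | base => simp
  | succ b hab ih =>
    have hsplit : Ico (g ^ a) (g ^ (b + 1)) = Ico (g ^ a) (g ^ b) ∪ Ico (g ^ b) (g ^ (b + 1)) :=
      (Ico_union_Ico_eq_Ico (Nat.pow_le_pow_right (by omega) hab)
        (Nat.pow_le_pow_right (by omega) b.le_succ)).symm
    have hblock := card_Sqr_inter_Ico_pow_ge hg hq r (ha.trans hab)
    rw [hsplit, filter_union, card_union_of_disjoint
      (disjoint_filter_filter (Ico_disjoint_Ico_consecutive _ _ _)), Nat.cast_add, pow_succ]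
    linarith

theorem one_div_le_ncard_Sqr_inter_Icc_div {g q : ℕ} (hg : 2 ≤ g) (hq : 0 < q) (r : ℤ) {x : ℕ}
    (hx : g ^ ((100 * g ^ (q + 1)) ^ 2 + 2) ≤ x) :
    1 / (2 * (g : ℝ) ^ (q + 1)) ≤ ((Sqr g q r ∩ Set.Icc 1 x).ncard : ℝ) / x := by
  classical
  set a := (100 * g ^ (q + 1)) ^ 2
  set b := Nat.log g x
  have hx0 : 0 < x := (Nat.pow_pos (by omega)).trans_le hx
  have hbx : g ^ b ≤ x := Nat.pow_log_le_self g hx0.ne'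
  have hxb : x < g ^ (b + 1) := Nat.lt_pow_succ_log_self (by omega) x
  have hab : a + 2 ≤ b := Nat.le_log_of_pow_le (by omega) hx
  have hsub : ↑{n ∈ Ico (g ^ a) (g ^ b) | n ∈ Sqr g q r} ⊆ Sqr g q r ∩ Set.Icc 1 x := by
    intro n hn
    simp only [coe_filter, mem_Ico, Set.mem_ofPred_eq] at hn
    exact ⟨hn.2, hn.2.1, hn.1.2.le.trans hbx⟩
  have hncard : (#{n ∈ Ico (g ^ a) (g ^ b) | n ∈ Sqr g q r} : ℝ) ≤
      (Sqr g q r ∩ Set.Icc 1 x).ncard := by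
    rw [← Set.ncard_coe_finset]
    exact_mod_cast Set.ncard_le_ncard hsub ((Set.finite_Icc 1 x).inter_of_right _)
  have hcount : 3 * ((g : ℝ) ^ b - g ^ a) ≤
      4 * g ^ q * #{n ∈ Ico (g ^ a) (g ^ b) | n ∈ Sqr g q r} :=
    card_Sqr_inter_Ico_pow_pow_ge hg hq r le_rfl (by omega)
  have hgR : (2 : ℝ) ≤ g := by exact_mod_cast hg
  have h4a : 4 * (g : ℝ) ^ a ≤ g ^ b := by
    calc 4 * (g : ℝ) ^ a ≤ g ^ 2 * g ^ a := by gcongr; nlinarith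
      _ = g ^ (a + 2) := by ring
      _ ≤ g ^ b := pow_le_pow_right₀ (by linarith) hab
  have hxR : (x : ℝ) < g * g ^ b := by rw [← pow_succ']; exact_mod_cast hxb
  have hgq : (0 : ℝ) ≤ g ^ q := by positivity
  have hb : 9 * (g : ℝ) ^ b ≤ 16 * g ^ q * (Sqr g q r ∩ Set.Icc 1 x).ncard := by
    nlinarith [mul_le_mul_of_nonneg_left hncard hgq]
  rw [div_le_div_iff₀ (by positivity) (by positivity), pow_succ]
  nlinarith [mul_le_mul_of_nonneg_left hb (by positivity : (0 : ℝ) ≤ g)]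

/-- Lemma 4: for integers `q > 0` and `r`, the set `S_{q,r}` of positive integers `n` with
(S1) `s_g(n) ≡ r (mod q)` and (S2) every positive `m` whose digit string is a substring of
that of `n` with `ℓ_g(m) ≥ 36 log ℓ_g(n)` satisfies `s_g(m) > (g-1)/3 · ℓ_g(m)`,
has lower asymptotic density at least `1/(2g^{q+1})`; in particular positive. -/
theorem Sqr_positive_density (g : ℕ) (hg : 2 ≤ g) (q : ℕ) (hq : 0 < q) (r : ℤ) :
    (1 : ℝ) / (2 * (g : ℝ) ^ (q + 1)) ≤
      Filter.atTop.liminf (fun x : ℕ =>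
        (({n : ℕ | 0 < n ∧ ((Nat.digits g n).sum : ℤ) ≡ r [ZMOD (q : ℤ)] ∧
            ∀ m : ℕ, 0 < m → (Nat.digits g m) <:+: (Nat.digits g n) →
              36 * Real.log ((Nat.digits g n).length) ≤ ((Nat.digits g m).length : ℝ) →
              (g - 1) * (Nat.digits g m).length < 3 * (Nat.digits g m).sum} ∩
          Set.Icc 1 x).ncard : ℝ) / x) ∧
    (0 : ℝ) < Filter.atTop.liminf (fun x : ℕ =>
        (({n : ℕ | 0 < n ∧ ((Nat.digits g n).sum : ℤ) ≡ r [ZMOD (q : ℤ)] ∧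
            ∀ m : ℕ, 0 < m → (Nat.digits g m) <:+: (Nat.digits g n) →
              36 * Real.log ((Nat.digits g n).length) ≤ ((Nat.digits g m).length : ℝ) →
              (g - 1) * (Nat.digits g m).length < 3 * (Nat.digits g m).sum} ∩
          Set.Icc 1 x).ncard : ℝ) / x) := by
  have hle_one : ∀ x : ℕ, ((Sqr g q r ∩ Set.Icc 1 x).ncard : ℝ) / x ≤ 1 := fun x =>
    div_le_one_of_le₀ (by exact_mod_cast (Set.ncard_le_ncard Set.inter_subset_right
      (Set.finite_Icc 1 x)).trans (by simp)) x.cast_nonneg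
  have hdensity : 1 / (2 * (g : ℝ) ^ (q + 1)) ≤
      Filter.atTop.liminf fun x : ℕ => ((Sqr g q r ∩ Set.Icc 1 x).ncard : ℝ) / x :=
    Filter.le_liminf_of_le (Filter.isCoboundedUnder_ge_of_le _ hle_one)
      (Filter.eventually_atTop.2 ⟨_, fun x hx => one_div_le_ncard_Sqr_inter_Icc_div hg hq r hx⟩)
  exact ⟨hdensity, (by positivity : (0 : ℝ) < 1 / (2 * (g : ℝ) ^ (q + 1))).trans_le hdensity⟩
end

section
/- Let g ≥ 2, q > 0, r be integers, ℓ > q an integer, and let d_1, ..., d_ℓ be independent uniformly distributed random variables in {0, ..., g-1}. Then the probability that d_ℓ ≠ 0 and Σ_{i=1}^ℓ d_i ≡ r (mod q) is at least 1/g^q. -/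
/-!
The first `ℓ - q` digits can be chosen freely. Whatever their sum `S`, the last `q` digits can
be completed by a block of zeros followed by `t + 1` ones, where `0 ≤ t < q` and
`t + 1 ≡ r - S (mod q)`; this ends in a nonzero digit and fixes the residue of the total sum.
Distinct prefixes give distinct tuples, so there are at least `g ^ (ℓ - q)` such tuples.
-/

open Finset

theorem exists_binary_tail_last_ne_zero_sum_modEq {g q : ℕ} (hg : 1 < g) (hq : 0 < q) (c : ℤ) :
    ∃ e : Fin q → Fin g, (e ⟨q - 1, by omega⟩ : ℕ) ≠ 0 ∧
      ((∑ i, (e i : ℕ) : ℕ) : ℤ) ≡ c [ZMOD q] := by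
  set t := ((c - 1) % q).toNat
  have ht : (t : ℤ) = (c - 1) % q := Int.toNat_of_nonneg (Int.emod_nonneg _ (by omega))
  have htq : t < q := by have := Int.emod_lt_of_pos (c - 1) (by omega : (0 : ℤ) < q); omega
  let k : Fin q := ⟨q - 1 - t, by omega⟩
  let e : Fin q → Fin g := fun i => if k ≤ i then ⟨1, hg⟩ else ⟨0, by omega⟩
  have hsum : ∑ i, (e i : ℕ) = t + 1 := by
    simp only [e, apply_ite Fin.val, sum_boole, Nat.cast_id, filter_le_eq_Ici, Fin.card_Ici, k]
    omega
  refine ⟨e, by simp [e, k, Fin.le_def, show q ≤ q - 1 + t + 1 by omega], ?_⟩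
  calc ((∑ i, (e i : ℕ) : ℕ) : ℤ) = (c - 1) % q + 1 := by rw [hsum]; push_cast [ht]; rfl
    _ ≡ c - 1 + 1 [ZMOD q] := (Int.mod_modEq _ _).add_right 1
    _ = c := sub_add_cancel c 1

theorem pow_le_card_tuples_last_ne_zero_sum_modEq {g : ℕ} (hg : 1 < g) (m : ℕ) {q : ℕ}
    (hq : 0 < q) (r : ℤ) :
    g ^ m ≤ Nat.card {d : Fin (m + q) → Fin g //
      (d ⟨m + q - 1, by omega⟩ : ℕ) ≠ 0 ∧ ((∑ i, (d i : ℕ) : ℕ) : ℤ) ≡ r [ZMOD q]} := by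
  choose tail hlast hsum using fun f : Fin m → Fin g =>
    exists_binary_tail_last_ne_zero_sum_modEq hg hq (r - ∑ i, (f i : ℕ))
  have hlast_index : (⟨m + q - 1, by omega⟩ : Fin (m + q)) = Fin.natAdd m ⟨q - 1, by omega⟩ := by
    ext; simp only [Fin.natAdd_mk]; omega
  let extend (f : Fin m → Fin g) : {d : Fin (m + q) → Fin g //
      (d ⟨m + q - 1, by omega⟩ : ℕ) ≠ 0 ∧ ((∑ i, (d i : ℕ) : ℕ) : ℤ) ≡ r [ZMOD q]} :=
    ⟨Fin.append f (tail f), by rw [hlast_index, Fin.append_right]; exact hlast f, by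
      simpa [Fin.sum_univ_add] using (hsum f).add_left (∑ i, (f i : ℤ))⟩
  have hinj : Function.Injective extend := fun f₁ f₂ h => by
    funext i
    simpa [extend] using congrFun (congrArg Subtype.val h) (Fin.castAdd q i)
  simpa using Nat.card_le_card_of_injective extend hinj

/-- For `ℓ > q > 0`, the number of tuples `(d 0, …, d (ℓ-1)) ∈ {0,…,g-1}^ℓ` whose last entry
is nonzero and whose sum is `≡ r (mod q)` is at least `g^(ℓ-q)`; equivalently the
corresponding probability for independent uniform digits is at least `1/g^q`. -/
theorem digit_tuples_count (g : ℕ) (hg : 2 ≤ g) (q : ℕ) (hq : 0 < q) (r : ℤ)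
    (ℓ : ℕ) (hℓ : q < ℓ) :
    g ^ (ℓ - q) ≤ Nat.card {d : Fin ℓ → Fin g //
      (d ⟨ℓ - 1, by omega⟩ : ℕ) ≠ 0 ∧ ((∑ i, (d i : ℕ) : ℕ) : ℤ) ≡ r [ZMOD (q : ℤ)]} := by
  obtain ⟨m, rfl⟩ : ∃ m, ℓ = m + q := ⟨ℓ - q, by omega⟩
  simpa using pow_le_card_tuples_last_ne_zero_sum_modEq hg m hq r
end

section
/- Let g ≥ 2 be an integer and let ℓ be an integer with ℓ ≥ 2. The probability that a uniformly random integer n in {0, ..., g^ℓ - 1} admits a substring m of its digit string with ℓ_g(m) ≥ 36 log ℓ and s_g(m) ≤ (g-1)/3 · ℓ_g(m) is less than 20/ℓ. -/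
/-!
A digit string of length `ℓ` has at most `ℓ²` windows `(i, L)`, and for each one the digits in it
are uniformly distributed on `{0, …, g ^ L - 1}`. A Chernoff bound, fed with Hoeffding's estimate
`∑_{d < g} e^{-t d} ≤ g e^{(t(g-1))²/8 - t(g-1)/2}` for a single digit, shows that at most
`(g e^{-1/18}) ^ L` of the `g ^ L` window values have digit sum `≤ (g - 1) L / 3`. Summing over
the windows with `L ≥ L₀ = ⌈36 log ℓ⌉` bounds the probability by `ℓ · 19 e^{-L₀/18} ≤ 19 / ℓ`.
-/

open Finset Real

theorem Finset.sum_range_mul_eq_sum_sum {M : Type*} [AddCommMonoid M] (f : ℕ → M) (a b : ℕ) :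
    ∑ n ∈ range (a * b), f n = ∑ v ∈ range b, ∑ d ∈ range a, f (d + a * v) := by
  induction b with
  | zero => simp
  | succ b ih =>
    rw [mul_add_one, sum_range_add, ih, sum_range_succ]
    simp only [add_comm (a * b)]

theorem card_filter_range_mul_div (a b : ℕ) (p : ℕ → Prop) [DecidablePred p] :
    #{n ∈ range (a * b) | p (n / a)} = a * #{v ∈ range b | p v} := by
  simp only [card_filter, sum_range_mul_eq_sum_sum, mul_sum]
  refine sum_congr rfl fun v _ => ?_
  rw [sum_congr rfl fun d hd => by
    rw [Nat.add_mul_div_left _ _ (by grind), Nat.div_eq_of_lt (mem_range.1 hd), zero_add]]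
  simp

theorem card_filter_range_mul_mod (a b : ℕ) (p : ℕ → Prop) [DecidablePred p] :
    #{n ∈ range (a * b) | p (n % a)} = b * #{d ∈ range a | p d} := by
  simp only [card_filter, sum_range_mul_eq_sum_sum]
  rw [sum_congr rfl fun v _ => sum_congr rfl fun d hd => by
    rw [Nat.add_mul_mod_self_left, Nat.mod_eq_of_lt (mem_range.1 hd)]]
  simp

theorem card_filter_range_pow_window_le (g ℓ i L : ℕ) (p : ℕ → Prop) [DecidablePred p] :
    #{n ∈ range (g ^ ℓ) | i + L ≤ ℓ ∧ p (n / g ^ i % g ^ L)} ≤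
      g ^ (ℓ - L) * #{u ∈ range (g ^ L) | p u} := by
  by_cases hiL : i + L ≤ ℓ
  · have hℓ : g ^ ℓ = g ^ i * (g ^ L * g ^ (ℓ - i - L)) := by
      rw [← pow_add, ← pow_add]; congr 1; omega
    have hℓL : g ^ (ℓ - L) = g ^ i * g ^ (ℓ - i - L) := by
      rw [← pow_add]; congr 1; omega
    simp only [hiL, true_and]
    rw [hℓ, card_filter_range_mul_div (p := fun v => p (v % g ^ L)), card_filter_range_mul_mod,
      hℓL, mul_assoc]
  · simp [hiL]

theorem Nat.card_fin_subtype_eq_card_filter_range (N : ℕ) (P : ℕ → Prop) [DecidablePred P] :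
    Nat.card {n : Fin N // P n} = #{n ∈ range N | P n} := by
  rw [Nat.card_eq_fintype_card, Fintype.card_subtype, ← card_map Fin.valEmbedding,
    ← Nat.Iio_eq_range, ← Fin.map_valEmbedding_univ, filter_map]
  rfl

theorem Nat.ofDigits_append_append_div_pow_mod_pow {g : ℕ} (hg : 1 < g) {s d : List ℕ}
    (hs : ∀ x ∈ s, x < g) (hd : ∀ x ∈ d, x < g) (t : List ℕ) :
    Nat.ofDigits g (s ++ d ++ t) / g ^ s.length % g ^ d.length = Nat.ofDigits g d := by
  rw [List.append_assoc, Nat.ofDigits_append, Nat.ofDigits_append,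
    Nat.add_mul_div_left _ _ (by positivity),
    Nat.div_eq_of_lt (Nat.ofDigits_lt_base_pow_length hg hs), zero_add, Nat.add_mul_mod_self_left,
    Nat.mod_eq_of_lt (Nat.ofDigits_lt_base_pow_length hg hd)]

theorem Nat.exists_window_of_digits_infix {g ℓ n m : ℕ} (hg : 1 < g) (hn : n < g ^ ℓ)
    (h : Nat.digits g m <:+: Nat.digits g n ++ List.replicate (ℓ - (Nat.digits g n).length) 0) :
    ∃ i, i + (Nat.digits g m).length ≤ ℓ ∧ n / g ^ i % g ^ (Nat.digits g m).length = m := by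
  obtain ⟨s, t, hst⟩ := h
  have hlen : (Nat.digits g n).length ≤ ℓ := (Nat.digits_length_le_iff hg n).2 hn
  have hdigit : ∀ x ∈ Nat.digits g n ++ List.replicate (ℓ - (Nat.digits g n).length) 0, x < g := by
    simp only [List.mem_append, List.mem_replicate]
    rintro x (hx | ⟨-, rfl⟩)
    exacts [Nat.digits_lt_base hg hx, by omega]
  refine ⟨s.length, ?_, ?_⟩
  · have := congrArg List.length hst
    simp only [List.length_append, List.length_replicate] at this
    omega
  · have hnD := Nat.ofDigits_append_replicate_zero (b := g) (k := ℓ - (Nat.digits g n).length)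
      (Nat.digits g n)
    rw [Nat.ofDigits_digits, ← hst] at hnD
    rw [← hnD, Nat.ofDigits_append_append_div_pow_mod_pow hg, Nat.ofDigits_digits]
    · exact fun x hx => hdigit x (hst ▸ by simp [hx])
    · exact fun x hx => Nat.digits_lt_base hg hx

theorem Nat.sum_digits_add_mul {g : ℕ} (hg : 1 < g) {d : ℕ} (hd : d < g) (v : ℕ) :
    (Nat.digits g (d + g * v)).sum = d + (Nat.digits g v).sum := by
  by_cases h : d = 0 ∧ v = 0
  · simp [h.1, h.2]
  · rw [Nat.digits_add g hg d v hd (by tauto), List.sum_cons]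

theorem sum_range_pow_pow_digits_sum {R : Type*} [CommSemiring R] {g : ℕ} (hg : 1 < g) (x : R)
    (L : ℕ) : ∑ u ∈ range (g ^ L), x ^ (Nat.digits g u).sum = (∑ d ∈ range g, x ^ d) ^ L := by
  induction L with
  | zero => simp
  | succ L ih =>
    rw [pow_succ', sum_range_mul_eq_sum_sum, pow_succ, ← ih, sum_mul_sum]
    refine sum_congr rfl fun v _ => sum_congr rfl fun d hd => ?_
    rw [Nat.sum_digits_add_mul hg (mem_range.1 hd), pow_add, mul_comm]

theorem card_filter_le_exp_mul_sum_exp {ι : Type*} (s : Finset ι) (f : ι → ℝ) (c : ℝ) {t : ℝ}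
    (ht : 0 ≤ t) [DecidablePred fun i => f i ≤ c] :
    (#{i ∈ s | f i ≤ c} : ℝ) ≤ exp (t * c) * ∑ i ∈ s, exp (-t * f i) := by
  rw [card_eq_sum_ones, Nat.cast_sum, mul_sum]
  calc ∑ i ∈ s with f i ≤ c, ((1 : ℕ) : ℝ)
      ≤ ∑ i ∈ s with f i ≤ c, exp (t * c) * exp (-t * f i) := by
        refine sum_le_sum fun i hi => ?_
        rw [← exp_add, Nat.cast_one]
        exact one_le_exp (by nlinarith [(mem_filter.1 hi).2])
    _ ≤ ∑ i ∈ s, exp (t * c) * exp (-t * f i) :=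
        sum_le_sum_of_subset_of_nonneg (filter_subset _ _) fun _ _ _ => by positivity

theorem sum_range_exp_neg_mul_le (g : ℕ) (t : ℝ) :
    ∑ d ∈ range g, exp (-t * d) ≤ g * exp ((t * (g - 1)) ^ 2 / 8 - t * (g - 1) / 2) := by
  set c : ℝ := (g - 1) / 2 with hc
  have hreflect : ∑ d ∈ range g, exp (-(t * (c - d))) = ∑ d ∈ range g, exp (t * (c - d)) := by
    rw [← sum_range_reflect]
    refine sum_congr rfl fun d hd => ?_
    rw [Nat.cast_sub (by grind), Nat.cast_sub (by grind)]
    congr 1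
    ring
  have hcosh : ∑ d ∈ range g, exp (t * (c - d)) = ∑ d ∈ range g, cosh (t * (c - d)) := by
    simp only [cosh_eq, ← sum_div, sum_add_distrib, hreflect]
    ring
  have hbound : ∀ d ∈ range g, cosh (t * (c - d)) ≤ exp ((t * c) ^ 2 / 2) := by
    intro d hd
    have hd : (d : ℝ) ≤ g - 1 := by
      have : d + 1 ≤ g := mem_range.1 hd
      rify at this
      linarith
    refine (cosh_le_exp_half_sq _).trans (exp_le_exp.2 ?_)
    have : (c - d) ^ 2 ≤ c ^ 2 := by nlinarith [mul_nonneg d.cast_nonneg (sub_nonneg.2 hd)]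
    nlinarith [sq_nonneg t]
  calc ∑ d ∈ range g, exp (-t * d) = exp (-(t * c)) * ∑ d ∈ range g, exp (t * (c - d)) := by
        rw [mul_sum]
        refine sum_congr rfl fun d _ => ?_
        rw [← exp_add]
        ring_nf
    _ ≤ exp (-(t * c)) * (g * exp ((t * c) ^ 2 / 2)) := by
        rw [hcosh]
        gcongr
        simpa using sum_le_card_nsmul _ _ _ hbound
    _ = g * exp ((t * (g - 1)) ^ 2 / 8 - t * (g - 1) / 2) := by
        rw [mul_left_comm, ← exp_add, hc]
        ring_nf

-- With `s = t (g - 1)` the exponent per digit is `s / 3 + s² / 8 - s / 2`, minimal at `s = 2 / 3`.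
theorem card_filter_three_mul_digits_sum_le {g : ℕ} (hg : 1 < g) (L : ℕ) :
    (#{u ∈ range (g ^ L) | 3 * (Nat.digits g u).sum ≤ (g - 1) * L} : ℝ) ≤
      (g * exp (-1 / 18)) ^ L := by
  have hg1 : (1 : ℝ) ≤ g - 1 := by
    have : (2 : ℝ) ≤ g := by exact_mod_cast hg
    linarith
  set t : ℝ := 2 / (3 * (g - 1)) with ht_def
  have ht : 0 ≤ t := by positivity
  have htg : t * (g - 1) = 2 / 3 := by
    rw [ht_def]
    field_simp
  have hfilter : {u ∈ range (g ^ L) | 3 * (Nat.digits g u).sum ≤ (g - 1) * L} =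
      {u ∈ range (g ^ L) | ((Nat.digits g u).sum : ℝ) ≤ (g - 1) * L / 3} := by
    refine filter_congr fun u _ => ?_
    rw [le_div_iff₀ (by norm_num), ← Nat.cast_le (α := ℝ)]
    push_cast [Nat.cast_sub hg.le]
    rw [mul_comm]
  have hgen : ∑ u ∈ range (g ^ L), exp (-t * (Nat.digits g u).sum) =
      (∑ d ∈ range g, exp (-t * d)) ^ L := by
    simp only [mul_comm (-t), exp_nat_mul]
    exact sum_range_pow_pow_digits_sum hg _ L
  have hdigit : exp (t * (g - 1) / 3) * ∑ d ∈ range g, exp (-t * d) ≤ g * exp (-1 / 18) := by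
    calc _ ≤ exp (t * (g - 1) / 3) * (g * exp ((t * (g - 1)) ^ 2 / 8 - t * (g - 1) / 2)) := by
          gcongr
          exact sum_range_exp_neg_mul_le g t
      _ = g * exp (-1 / 18) := by
          rw [mul_left_comm, ← exp_add, htg]
          norm_num
  rw [hfilter]
  calc _ ≤ exp (t * ((g - 1) * L / 3)) * ∑ u ∈ range (g ^ L), exp (-t * (Nat.digits g u).sum) :=
        card_filter_le_exp_mul_sum_exp _ _ _ ht
    _ = (exp (t * (g - 1) / 3) * ∑ d ∈ range g, exp (-t * d)) ^ L := by
        rw [hgen, mul_pow, ← exp_nat_mul]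
        ring_nf
    _ ≤ (g * exp (-1 / 18)) ^ L := by gcongr

def AdmitsLowSumSubstring (g ℓ : ℕ) (c : ℝ) (n : ℕ) : Prop :=
  ∃ m : ℕ, 0 < m ∧
    Nat.digits g m <:+: Nat.digits g n ++ List.replicate (ℓ - (Nat.digits g n).length) 0 ∧
    c ≤ ((Nat.digits g m).length : ℝ) ∧
    3 * (Nat.digits g m).sum ≤ (g - 1) * (Nat.digits g m).length

theorem card_filter_admitsLowSumSubstring_le {g : ℕ} (hg : 1 < g) (ℓ : ℕ) (c : ℝ)
    [DecidablePred (AdmitsLowSumSubstring g ℓ c)] :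
    #{n ∈ range (g ^ ℓ) | AdmitsLowSumSubstring g ℓ c n} ≤
      ℓ * ∑ L ∈ Icc ⌈c⌉₊ ℓ,
        g ^ (ℓ - L) * #{u ∈ range (g ^ L) | 3 * (Nat.digits g u).sum ≤ (g - 1) * L} := by
  set window : ℕ × ℕ → Finset ℕ := fun w =>
    {n ∈ range (g ^ ℓ) | w.2 + w.1 ≤ ℓ ∧
      3 * (Nat.digits g (n / g ^ w.2 % g ^ w.1)).sum ≤ (g - 1) * w.1}
  have hcover : {n ∈ range (g ^ ℓ) | AdmitsLowSumSubstring g ℓ c n} ⊆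
      (Icc ⌈c⌉₊ ℓ ×ˢ range ℓ).biUnion window := by
    intro n hn
    simp only [mem_filter, mem_range] at hn
    obtain ⟨hn, m, hm, hinfix, hc, hlow⟩ := hn
    obtain ⟨i, hi, hwindow⟩ := Nat.exists_window_of_digits_infix hg hn hinfix
    have hm : 0 < (Nat.digits g m).length :=
      List.length_pos_iff.2 (Nat.digits_ne_nil_iff_ne_zero.2 hm.ne')
    simp only [window, mem_biUnion, mem_product, mem_Icc, mem_range, mem_filter]
    exact ⟨((Nat.digits g m).length, i), ⟨⟨Nat.ceil_le.2 hc, by omega⟩, by omega⟩, hn, hi,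
      by rwa [hwindow]⟩
  calc _ ≤ #((Icc ⌈c⌉₊ ℓ ×ˢ range ℓ).biUnion window) := card_le_card hcover
    _ ≤ ∑ w ∈ Icc ⌈c⌉₊ ℓ ×ˢ range ℓ, #(window w) := card_biUnion_le
    _ ≤ ∑ w ∈ Icc ⌈c⌉₊ ℓ ×ˢ range ℓ,
          g ^ (ℓ - w.1) * #{u ∈ range (g ^ w.1) | 3 * (Nat.digits g u).sum ≤ (g - 1) * w.1} :=
        sum_le_sum fun w _ => card_filter_range_pow_window_le g ℓ w.2 w.1
          (fun u => 3 * (Nat.digits g u).sum ≤ (g - 1) * w.1)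
    _ = _ := by rw [sum_product, mul_sum]; simp

theorem card_filter_admitsLowSumSubstring_div_le {g : ℕ} (hg : 1 < g) (ℓ : ℕ) (c : ℝ)
    [DecidablePred (AdmitsLowSumSubstring g ℓ c)] :
    (#{n ∈ range (g ^ ℓ) | AdmitsLowSumSubstring g ℓ c n} : ℝ) / g ^ ℓ ≤
      ℓ * ∑ L ∈ Icc ⌈c⌉₊ ℓ, exp (-1 / 18) ^ L := by
  rw [div_le_iff₀ (by positivity), mul_assoc, sum_mul]
  refine (Nat.cast_le.2 (card_filter_admitsLowSumSubstring_le hg ℓ c)).trans ?_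
  push_cast
  refine mul_le_mul_of_nonneg_left (sum_le_sum fun L hL => ?_) ℓ.cast_nonneg
  calc _ ≤ (g : ℝ) ^ (ℓ - L) * (g * exp (-1 / 18)) ^ L := by
        gcongr
        exact card_filter_three_mul_digits_sum_le hg L
    _ = _ := by
        rw [mul_pow, ← mul_assoc, ← pow_add, Nat.sub_add_cancel (mem_Icc.1 hL).2, mul_comm]

theorem sum_Icc_exp_neg_pow_le (a b : ℕ) :
    ∑ L ∈ Icc a b, exp (-1 / 18) ^ L ≤ 19 * exp (-1 / 18) ^ a := by
  have hr : exp (-1 / 18) ≤ 18 / 19 := by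
    rw [neg_div, exp_neg, inv_le_comm₀ (exp_pos _) (by norm_num)]
    linarith [add_one_le_exp (1 / 18 : ℝ)]
  rw [← Finset.Ico_add_one_right_eq_Icc]
  calc _ ≤ exp (-1 / 18) ^ a / (1 - exp (-1 / 18)) :=
        geom_sum_Ico_le_of_lt_one (exp_pos _).le (by linarith)
    _ ≤ 19 * exp (-1 / 18) ^ a := by
        rw [div_le_iff₀ (by linarith)]
        nlinarith [pow_pos (exp_pos (-1 / 18)) a]

theorem exp_neg_pow_le_inv_sq {x : ℝ} (hx : 0 < x) {n : ℕ} (hn : 36 * log x ≤ n) :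
    exp (-1 / 18) ^ n ≤ (x ^ 2)⁻¹ := by
  rw [← exp_nat_mul, ← exp_log (by positivity : 0 < (x ^ 2)⁻¹), log_inv, log_pow]
  exact exp_le_exp.2 (by push_cast; linarith)

/-- For `ℓ ≥ 2`, the probability that a uniformly random `n ∈ {0,…,g^ℓ - 1}` admits a
positive integer `m` whose base-`g` digit string is a contiguous substring of the (zero
padded) length-`ℓ` digit string of `n`, with `ℓ_g(m) ≥ 36 log ℓ` and
`s_g(m) ≤ (g-1)/3 · ℓ_g(m)`, is less than `20/ℓ`. -/
theorem bad_substring_probability (g : ℕ) (hg : 2 ≤ g) (ℓ : ℕ) (hℓ : 2 ≤ ℓ) :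
    (Nat.card {n : Fin (g ^ ℓ) // ∃ m : ℕ, 0 < m ∧
        (Nat.digits g m) <:+:
          ((Nat.digits g (n : ℕ)) ++ List.replicate (ℓ - (Nat.digits g (n : ℕ)).length) 0) ∧
        36 * Real.log ℓ ≤ ((Nat.digits g m).length : ℝ) ∧
        3 * (Nat.digits g m).sum ≤ (g - 1) * (Nat.digits g m).length} : ℝ) / (g : ℝ) ^ ℓ
      < 20 / ℓ := by
  classical
  have hℓ0 : (0 : ℝ) < ℓ := by positivity
  change (Nat.card {n : Fin (g ^ ℓ) // AdmitsLowSumSubstring g ℓ (36 * log ℓ) n} : ℝ) / _ < _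
  rw [Nat.card_fin_subtype_eq_card_filter_range]
  calc _ ≤ ℓ * ∑ L ∈ Icc ⌈36 * log ℓ⌉₊ ℓ, exp (-1 / 18) ^ L :=
        card_filter_admitsLowSumSubstring_div_le hg ℓ _
    _ ≤ ℓ * (19 * (ℓ ^ 2 : ℝ)⁻¹) := by
        gcongr
        exact (sum_Icc_exp_neg_pow_le _ ℓ).trans
          (by gcongr; exact exp_neg_pow_le_inv_sq hℓ0 (Nat.le_ceil _))
    _ < 20 / ℓ := by
        field_simp
        norm_num
end

section
/- Let A be a set of positive integers with 1 ∈ A. If A has positive lower asymptotic density, then A is an additive basis, i.e., there exists a positive integer k such that every natural number is the sum of at most k elements of A. -/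
/-!
Schnirelmann's argument. For `0 ∈ A, B`, cutting `(0, n]` at the largest element `a` of `A` and
filling the gap `(a, n]` with `a + B` gives `σ(A + B) ≥ σ A + σ B - σ A σ B` for the Schnirelmann
density `σ`, hence `σ(k • A) ≥ 1 - (1 - σ A) ^ k`. Once `σ(k • A) ≥ 1 / 2`, a pigeonhole argument
gives `k • A + k • A = ℕ`. Positive lower density together with `1 ∈ A` makes `σ A` positive, and
adjoining `0` to `A` changes neither `σ A` nor which numbers are sums of at most `k` elements.
-/

open Finset Filter
open scoped Pointwise

section SchnirelmannInequality

variable {A B : Set ℕ}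

lemma card_filter_Ioc_add_le_of_mem [DecidablePred (· ∈ B)] [DecidablePred (· ∈ A + B)]
    (hB : 0 ∈ B) {k : ℕ} (hk : k + 1 ∈ A) (m : ℕ) :
    #{c ∈ Ioc 0 k | c ∈ A + B} + 1 + #{b ∈ Ioc 0 m | b ∈ B} ≤
      #{c ∈ Ioc 0 (k + 1 + m) | c ∈ A + B} := by
  set shifted := insert (k + 1) ({b ∈ Ioc 0 m | b ∈ B}.image (k + 1 + ·))
  have hshifted : #shifted = 1 + #{b ∈ Ioc 0 m | b ∈ B} := by
    rw [card_insert_of_notMem (by simp), card_image_of_injective _ (add_right_injective _),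
      add_comm]
  have hdisj : Disjoint {c ∈ Ioc 0 k | c ∈ A + B} shifted := by
    rw [disjoint_left]
    intro c hc hc'
    simp only [shifted, mem_insert, mem_image, mem_filter, mem_Ioc] at hc hc'
    omega
  have hsub : {c ∈ Ioc 0 k | c ∈ A + B} ∪ shifted ⊆ {c ∈ Ioc 0 (k + 1 + m) | c ∈ A + B} := by
    intro c hc
    simp only [shifted, mem_union, mem_insert, mem_image, mem_filter, mem_Ioc] at hc ⊢
    rcases hc with ⟨hc, hcAB⟩ | rfl | ⟨b, ⟨hb, hbB⟩, rfl⟩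
    · exact ⟨by omega, hcAB⟩
    · exact ⟨by omega, by simpa using Set.add_mem_add hk hB⟩
    · exact ⟨by omega, Set.add_mem_add hk hbB⟩
  calc _ = #({c ∈ Ioc 0 k | c ∈ A + B} ∪ shifted) := by
        rw [card_union_of_disjoint hdisj, hshifted, add_assoc]
    _ ≤ _ := card_le_card hsub

lemma card_filter_Ioc_eq_succ_of_greatest [DecidablePred (· ∈ A)] {k m : ℕ} (hk : k + 1 ∈ A)
    (hgap : ∀ j, k + 1 < j → j ≤ k + 1 + m → j ∉ A) :
    #{a ∈ Ioc 0 (k + 1 + m) | a ∈ A} = #{a ∈ Ioc 0 k | a ∈ A} + 1 := by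
  have : {a ∈ Ioc 0 (k + 1 + m) | a ∈ A} = insert (k + 1) {a ∈ Ioc 0 k | a ∈ A} := by
    ext j
    simp only [mem_insert, mem_filter, mem_Ioc]
    grind
  rw [this, card_insert_of_notMem (by simp)]

lemma card_filter_add_sub_mul_le [DecidablePred (· ∈ A)] [DecidablePred (· ∈ B)]
    [DecidablePred (· ∈ A + B)] (hA : 0 ∈ A) (hB : 0 ∈ B) (n : ℕ) :
    #{a ∈ Ioc 0 n | a ∈ A} + schnirelmannDensity B * (n - #{a ∈ Ioc 0 n | a ∈ A}) ≤
      #{c ∈ Ioc 0 n | c ∈ A + B} := by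
  induction n using Nat.strong_induction_on with | _ n ih =>
  rcases hgreatest : Nat.findGreatest (· ∈ A) n with _ | k
  · have hA0 : #{a ∈ Ioc 0 n | a ∈ A} = 0 := by
      rw [card_eq_zero, filter_eq_empty_iff]
      intro j hj
      exact Nat.findGreatest_eq_zero_iff.1 hgreatest (mem_Ioc.1 hj).1 (mem_Ioc.1 hj).2
    have hBAB : #{b ∈ Ioc 0 n | b ∈ B} ≤ #{c ∈ Ioc 0 n | c ∈ A + B} :=
      card_le_card (monotone_filter_right _ fun b _ hb => by simpa using Set.add_mem_add hA hb)
    rw [hA0, Nat.cast_zero, zero_add, sub_zero]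
    exact schnirelmannDensity_mul_le_card_filter.trans (by exact_mod_cast hBAB)
  · have hkn : k + 1 ≤ n := hgreatest ▸ Nat.findGreatest_le n
    obtain ⟨m, rfl⟩ := Nat.exists_eq_add_of_le hkn
    have hk : k + 1 ∈ A := Nat.findGreatest_of_ne_zero hgreatest k.succ_ne_zero
    have hgap : ∀ j, k + 1 < j → j ≤ k + 1 + m → j ∉ A :=
      fun j hj hjn => Nat.findGreatest_is_greatest (by rwa [hgreatest]) hjn
    have hC := Nat.cast_le (α := ℝ) |>.2 (card_filter_Ioc_add_le_of_mem hB hk m)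
    have hBm : schnirelmannDensity B * m ≤ #{b ∈ Ioc 0 m | b ∈ B} :=
      schnirelmannDensity_mul_le_card_filter
    have hIH := ih k (by omega)
    rw [card_filter_Ioc_eq_succ_of_greatest hk hgap]
    push_cast at hC ⊢
    linarith

theorem schnirelmannDensity_add_sub_mul_le [DecidablePred (· ∈ A)]
    [DecidablePred (· ∈ B)] [DecidablePred (· ∈ A + B)] (hA : 0 ∈ A) (hB : 0 ∈ B) :
    schnirelmannDensity A + schnirelmannDensity B - schnirelmannDensity A * schnirelmannDensity B ≤
      schnirelmannDensity (A + B) := by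
  rw [le_schnirelmannDensity_iff]
  intro n hn
  have hn' : (0 : ℝ) < n := by exact_mod_cast hn
  rw [le_div_iff₀ hn']
  have hAn := schnirelmannDensity_mul_le_card_filter (A := A) (n := n)
  have hB1 : schnirelmannDensity B ≤ 1 := schnirelmannDensity_le_one
  calc _ = schnirelmannDensity B * n + (1 - schnirelmannDensity B) * (schnirelmannDensity A * n) :=
        by ring
    _ ≤ schnirelmannDensity B * n + (1 - schnirelmannDensity B) * #{a ∈ Ioc 0 n | a ∈ A} := by
        gcongr
    _ = _ := by ring
    _ ≤ _ := card_filter_add_sub_mul_le hA hB n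

end SchnirelmannInequality

open scoped Classical in
lemma one_sub_pow_le_schnirelmannDensity_nsmul {A : Set ℕ} [DecidablePred (· ∈ A)] (hA : 0 ∈ A)
    (k : ℕ) : 1 - (1 - schnirelmannDensity A) ^ k ≤ schnirelmannDensity (k • A) := by
  induction k with
  | zero => simp [schnirelmannDensity_nonneg]
  | succ k ih =>
    have hadd := schnirelmannDensity_add_sub_mul_le (Set.zero_mem_nsmul hA) hA (A := k • A)
    have hA1 : 0 ≤ 1 - schnirelmannDensity A := sub_nonneg.2 schnirelmannDensity_le_one
    rw [succ_nsmul]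
    calc 1 - (1 - schnirelmannDensity A) ^ (k + 1)
        = 1 - (1 - schnirelmannDensity A) ^ k * (1 - schnirelmannDensity A) := by ring
      _ ≤ 1 - (1 - schnirelmannDensity (k • A)) * (1 - schnirelmannDensity A) := by
        gcongr
        linarith
      _ ≤ _ := by linarith

theorem exists_nsmul_eq_univ_of_schnirelmannDensity_pos {A : Set ℕ} [DecidablePred (· ∈ A)]
    (hA : 0 ∈ A) (hσ : 0 < schnirelmannDensity A) : ∃ k, 0 < k ∧ k • A = Set.univ := by
  classical
  obtain ⟨k, hk⟩ := exists_pow_lt_of_lt_one (by norm_num : (0 : ℝ) < 1 / 2)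
    (by linarith : 1 - schnirelmannDensity A < 1)
  have hkpos : 0 < k := Nat.pos_of_ne_zero (by rintro rfl; norm_num at hk)
  have hhalf : 1 / 2 ≤ schnirelmannDensity (k • A) := by
    linarith [one_sub_pow_le_schnirelmannDensity_nsmul hA k]
  refine ⟨k + k, by omega, ?_⟩
  rw [add_nsmul]
  exact add_eq_univ_of_one_le_schirelmannDensity_add_schnirelmannDensity
    (Set.zero_mem_nsmul hA) (Set.zero_mem_nsmul hA) (by linarith)

lemma ncard_inter_Icc_eq_card_filter_Ioc (A : Set ℕ) [DecidablePred (· ∈ A)] (n : ℕ) :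
    (A ∩ Set.Icc 1 n).ncard = #{a ∈ Ioc 0 n | a ∈ A} := by
  rw [← Set.ncard_coe_finset]
  congr 1
  ext a
  simp only [Set.mem_inter_iff, Set.mem_Icc, coe_filter, mem_Ioc, Set.mem_ofPred_eq]
  grind

lemma schnirelmannDensity_pos_of_liminf_pos {A : Set ℕ} [DecidablePred (· ∈ A)] (h1 : 1 ∈ A)
    (hd : 0 < atTop.liminf (fun n : ℕ => ((A ∩ Set.Icc 1 n).ncard : ℝ) / n)) :
    0 < schnirelmannDensity A := by
  set d := atTop.liminf (fun n : ℕ => ((A ∩ Set.Icc 1 n).ncard : ℝ) / n)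
  obtain ⟨N, hN⟩ := eventually_atTop.1 <| eventually_lt_of_lt_liminf (half_lt_self hd)
    (isBoundedUnder_of ⟨0, fun n => by positivity⟩)
  refine (lt_min (half_pos hd) (by positivity : (0 : ℝ) < (N + 1 : ℝ)⁻¹)).trans_le ?_
  rw [le_schnirelmannDensity_iff]
  intro n hn
  rcases le_or_gt N n with hNn | hnN
  · have := hN n hNn
    rw [ncard_inter_Icc_eq_card_filter_Ioc] at this
    exact (min_le_left _ _).trans this.le
  · have hcount : (1 : ℝ) ≤ #{a ∈ Ioc 0 n | a ∈ A} := by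
      exact_mod_cast card_pos.2 ⟨1, mem_filter.2 ⟨mem_Ioc.2 ⟨zero_lt_one, hn⟩, h1⟩⟩
    have hn' : (0 : ℝ) < n := by exact_mod_cast hn
    calc min (d / 2) (N + 1 : ℝ)⁻¹ ≤ (n : ℝ)⁻¹ := (min_le_right _ _).trans <|
          inv_anti₀ hn' (by exact_mod_cast (hnN.trans (Nat.lt_succ_self N)).le)
      _ ≤ _ := by rw [inv_eq_one_div]; gcongr

lemma exists_list_sum_eq_of_mem_nsmul_insert_zero {α : Type*} [AddMonoid α] {A : Set α}
    {k : ℕ} {x : α} (hx : x ∈ k • insert 0 A) :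
    ∃ L : List α, L.length ≤ k ∧ (∀ a ∈ L, a ∈ A) ∧ L.sum = x := by
  induction k generalizing x with
  | zero =>
    rw [zero_nsmul, Set.mem_zero] at hx
    exact ⟨[], le_rfl, by simp, hx.symm⟩
  | succ k ih =>
    rw [succ_nsmul'] at hx
    obtain ⟨a, ha, y, hy, rfl⟩ := hx
    obtain ⟨L, hL, hLA, rfl⟩ := ih hy
    rcases ha with rfl | ha
    · exact ⟨L, hL.trans k.le_succ, hLA, (zero_add _).symm⟩
    · exact ⟨a :: L, by simpa using hL, by simpa [ha] using hLA, List.sum_cons⟩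

theorem additive_basis_of_positive_density_general (A : Set ℕ)
    (h1 : 1 ∈ A)
    (hd : 0 < Filter.atTop.liminf (fun n : ℕ => ((A ∩ Set.Icc 1 n).ncard : ℝ) / n)) :
    ∃ k : ℕ, 0 < k ∧ ∀ n : ℕ, ∃ L : List ℕ,
      L.length ≤ k ∧ (∀ a ∈ L, a ∈ A) ∧ L.sum = n := by
  classical
  have hσ : 0 < schnirelmannDensity (insert 0 A) := by
    rw [schnirelmannDensity_congr' (B := A) fun n hn => by simp [hn.ne']]
    exact schnirelmannDensity_pos_of_liminf_pos h1 hd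
  obtain ⟨k, hk, hkA⟩ := exists_nsmul_eq_univ_of_schnirelmannDensity_pos (Set.mem_insert 0 A) hσ
  exact ⟨k, hk, fun n => exists_list_sum_eq_of_mem_nsmul_insert_zero (hkA ▸ Set.mem_univ n)⟩

/-- Schnirelmann's theorem (consequence): a set of positive integers containing `1` and
having positive lower asymptotic density is an additive basis: there is `k ≥ 1` such that
every natural number is the sum of at most `k` elements of `A`. -/
theorem additive_basis_of_positive_density (A : Set ℕ) (hpos : ∀ a ∈ A, 0 < a)
    (h1 : 1 ∈ A)
    (hd : 0 < Filter.atTop.liminf (fun n : ℕ => ((A ∩ Set.Icc 1 n).ncard : ℝ) / n)) :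
    ∃ k : ℕ, 0 < k ∧ ∀ n : ℕ, ∃ L : List ℕ,
      L.length ≤ k ∧ (∀ a ∈ L, a ∈ A) ∧ L.sum = n :=
  additive_basis_of_positive_density_general A h1 hd
end
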